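/- arXiv:1803.08551 — 8 statements merged into one kernel-verified Lean document; each statement's English description precedes it below -/
import Mathlib

section
/- Let G = (N, E) be a finite simple connected graph with an arbitrary orientation of its m edges and n vertices, vertex-edge incidence matrix C ∈ ℝ^{n×m} (C_{ia} = 1 if i is the source of edge a, −1 if i is the target, 0 otherwise), and positive susceptances B_a with B = diag(B_a). Let e = (i,j) ∈ E be an edge such that G' = (N, E∖{e}) is connected, and let ê = (w,z) ∈ E with ê ≠ e. Let p ∈ ℝ^n with Σ_k p_k = 0, and let θ, θ' ∈ ℝ^n satisfy C B Cᵀ θ = p and C' B' C'ᵀ θ' = p, where C' and B' are the incidence and susceptance matrices of G'. Then the branch flow change on ê satisfies (B' C'ᵀ θ')_ê − (B Cᵀ θ)_ê = P_e · B_ê · ( Σ_{F ∈ T({i,w},{j,z})} χ(F) − Σ_{F ∈ T({i,z},{j,w})} χ(F) ) / ( Σ_{T a spanning tree of G'} χ(T) ), where P_e = (B Cᵀ θ)_e. -/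
open Finset

variable {V : Type*} [Fintype V] [DecidableEq V]

/-- `F` is the edge set of a spanning forest of `G` consisting of exactly two
vertex-disjoint trees that together cover all vertices of `G`, one tree containing
every vertex of `N₁` and the other containing every vertex of `N₂`. -/
def IsTwoTreeForest (G : SimpleGraph V) (N₁ N₂ : Set V) (F : Finset (Sym2 V)) : Prop :=
  ↑F ⊆ G.edgeSet ∧
    (SimpleGraph.fromEdgeSet (↑F : Set (Sym2 V))).IsAcyclic ∧
    ∃ u v : V,
      ¬(SimpleGraph.fromEdgeSet (↑F : Set (Sym2 V))).Reachable u v ∧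
      (∀ x : V, (SimpleGraph.fromEdgeSet (↑F : Set (Sym2 V))).Reachable x u ∨
        (SimpleGraph.fromEdgeSet (↑F : Set (Sym2 V))).Reachable x v) ∧
      (∀ x ∈ N₁, (SimpleGraph.fromEdgeSet (↑F : Set (Sym2 V))).Reachable x u) ∧
      (∀ x ∈ N₂, (SimpleGraph.fromEdgeSet (↑F : Set (Sym2 V))).Reachable x v)

/-- The set `T(N₁, N₂)` of spanning forests of `G` consisting of exactly two trees,
one containing `N₁` and the other containing `N₂`, identified with their edge sets. -/
noncomputable def twoForests (G : SimpleGraph V) (N₁ N₂ : Set V) :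
    Finset (Finset (Sym2 V)) :=
  letI := Classical.decPred (IsTwoTreeForest G N₁ N₂)
  Finset.univ.filter (IsTwoTreeForest G N₁ N₂)

/-- `F` is the edge set of a spanning tree of `G`. -/
def IsSpanningTreeEdgeSet (G : SimpleGraph V) (F : Finset (Sym2 V)) : Prop :=
  ↑F ⊆ G.edgeSet ∧ (SimpleGraph.fromEdgeSet (↑F : Set (Sym2 V))).IsTree

/-- The set of (edge sets of) spanning trees of `G`. -/
noncomputable def spanningTrees (G : SimpleGraph V) : Finset (Finset (Sym2 V)) :=
  letI := Classical.decPred (IsSpanningTreeEdgeSet G)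
  Finset.univ.filter (IsSpanningTreeEdgeSet G)

/-- The weight `χ(F)` of an edge set `F`: the product of the susceptances of its edges. -/
def chi (B : Sym2 V → ℝ) (F : Finset (Sym2 V)) : ℝ := ∏ a ∈ F, B a

/-- The line outage distribution factor `K_{e ê}` for the edges `e = (i, j)` and
`ê = (w, z)` of `G`, with susceptances `B`:
`K_{e ê} = B_ê · (Σ_{F ∈ T({i,w},{j,z})} χ(F) − Σ_{F ∈ T({i,z},{j,w})} χ(F)) /
(Σ_{T spanning tree of G − e} χ(T))`. -/
noncomputable def lodf (G : SimpleGraph V) (B : Sym2 V → ℝ) (i j w z : V) : ℝ :=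
  B s(w, z) *
    ((∑ F ∈ twoForests G {i, w} {j, z}, chi B F) -
      ∑ F ∈ twoForests G {i, z} {j, w}, chi B F) /
    ∑ F ∈ spanningTrees (G.deleteEdges {s(i, j)}), chi B F

open Matrix in
/-- The vertex-edge incidence matrix of a graph whose edges are indexed by `α` and are
oriented by the source map `src` and the target map `tgt`. -/
def incidenceMatrix {α : Type*} (src tgt : α → V) : Matrix V α ℝ :=
  Matrix.of fun v a => if v = src a then (1 : ℝ) else if v = tgt a then -1 else 0


set_option linter.unusedSectionVars false in
open SimpleGraph in
lemma mem_twoForests {G : SimpleGraph V} {N₁ N₂ : Set V} {F : Finset (Sym2 V)} :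
    F ∈ twoForests G N₁ N₂ ↔ IsTwoTreeForest G N₁ N₂ F := by
  unfold twoForests
  classical
  simp [Finset.mem_filter]

set_option linter.unusedSectionVars false in
open SimpleGraph in
lemma mem_spanningTrees {G : SimpleGraph V} {F : Finset (Sym2 V)} :
    F ∈ spanningTrees G ↔ IsSpanningTreeEdgeSet G F := by
  unfold spanningTrees
  classical
  simp [Finset.mem_filter]

set_option linter.unusedSectionVars false in
open SimpleGraph in
lemma gr_adj {F : Finset (Sym2 V)} {x y : V} :
    (SimpleGraph.fromEdgeSet (↑F : Set (Sym2 V))).Adj x y ↔ s(x, y) ∈ F ∧ x ≠ y := by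
  simp [SimpleGraph.fromEdgeSet_adj]

set_option linter.unusedSectionVars false in
open SimpleGraph in
lemma gr_erase {F : Finset (Sym2 V)} {s : Sym2 V} :
    SimpleGraph.fromEdgeSet (↑(F.erase s) : Set (Sym2 V)) =
      (SimpleGraph.fromEdgeSet (↑F : Set (Sym2 V))).deleteEdges {s} := by
  ext x y
  simp only [fromEdgeSet_adj, Finset.coe_erase, Set.mem_diff, deleteEdges_adj,
    Set.mem_singleton_iff, Finset.mem_coe, Finset.mem_erase]
  tauto
set_option linter.unusedSectionVars false

open SimpleGraph

/-- Reachability covering: removing one edge `s(c,d)`, from any vertex one can still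
reach the far end of a walk, or one of `c`, `d`. -/
lemma reach_cover {H : SimpleGraph V} {x y : V} (w : H.Walk x y) (c d : V) :
    (H.deleteEdges {s(c, d)}).Reachable x y ∨ (H.deleteEdges {s(c, d)}).Reachable x c ∨
      (H.deleteEdges {s(c, d)}).Reachable x d := by
  induction w with
  | nil => exact Or.inl (Reachable.refl _)
  | @cons a a₁ y h w ih =>
    by_cases he : s(a, a₁) = s(c, d)
    · rw [Sym2.eq_iff] at he
      rcases he with ⟨rfl, rfl⟩ | ⟨rfl, rfl⟩
      · exact Or.inr (Or.inl (Reachable.refl _))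
      · exact Or.inr (Or.inr (Reachable.refl _))
    · have hadj : (H.deleteEdges {s(c, d)}).Adj a a₁ := by
        rw [deleteEdges_adj]
        exact ⟨h, by simpa using he⟩
      rcases ih with h1 | h1 | h1
      · exact Or.inl (hadj.reachable.trans h1)
      · exact Or.inr (Or.inl (hadj.reachable.trans h1))
      · exact Or.inr (Or.inr (hadj.reachable.trans h1))

/-- If the two endpoints of a deleted edge remain reachable, reachability is preserved. -/
lemma reach_of_reach_delete {H : SimpleGraph V} {c d : V}
    (hcd : (H.deleteEdges {s(c, d)}).Reachable c d) {x y : V} (w : H.Walk x y) :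
    (H.deleteEdges {s(c, d)}).Reachable x y := by
  induction w with
  | nil => exact Reachable.refl _
  | @cons a a₁ y h w ih =>
    by_cases he : s(a, a₁) = s(c, d)
    · rw [Sym2.eq_iff] at he
      rcases he with ⟨rfl, rfl⟩ | ⟨rfl, rfl⟩
      · exact hcd.trans ih
      · exact hcd.symm.trans ih
    · have hadj : (H.deleteEdges {s(c, d)}).Adj a a₁ := by
        rw [deleteEdges_adj]
        exact ⟨h, by simpa using he⟩
      exact hadj.reachable.trans ih

lemma connected_delete {H : SimpleGraph V} (hH : H.Connected) {c d : V}
    (hcd : (H.deleteEdges {s(c, d)}).Reachable c d) :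
    (H.deleteEdges {s(c, d)}).Connected := by
  have hne : Nonempty V := hH.nonempty
  exact Connected.mk fun x y => reach_of_reach_delete hcd ((hH.preconnected x y).some)

/-- Every finite connected graph contains a spanning tree (as an edge finset). -/
lemma exists_spanning_tree (H : SimpleGraph V) (hH : H.Connected) :
    ∃ F : Finset (Sym2 V), ↑F ⊆ H.edgeSet ∧
      (SimpleGraph.fromEdgeSet (↑F : Set (Sym2 V))).IsTree := by
  classical
  obtain ⟨n, hn⟩ : ∃ n, H.edgeFinset.card = n := ⟨_, rfl⟩
  induction n using Nat.strong_induction_on generalizing H with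
  | _ n ih =>
    by_cases hac : H.IsAcyclic
    · refine ⟨H.edgeFinset, by simp, ?_⟩
      rw [coe_edgeFinset, fromEdgeSet_edgeSet]
      exact ⟨hH, hac⟩
    · rw [isAcyclic_iff_forall_edge_isBridge] at hac
      push_neg at hac
      obtain ⟨s, hs, hbr⟩ := hac
      induction s with
      | _ c d =>
        rw [isBridge_iff] at hbr
        push_neg at hbr
        have hre : (H.deleteEdges {s(c, d)}).Reachable c d := hbr
        have hconn : (H.deleteEdges {s(c, d)}).Connected := connected_delete hH hre
        have hcard : (H.deleteEdges {s(c, d)}).edgeFinset.card < n := by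
          subst hn
          apply Finset.card_lt_card
          rw [Finset.ssubset_iff_of_subset (by simp [edgeFinset_mono, deleteEdges_le])]
          refine ⟨s(c, d), ?_, ?_⟩
          · rwa [mem_edgeFinset]
          · simp [edgeSet_deleteEdges]
        obtain ⟨F, hF1, hF2⟩ := ih _ hcard _ hconn (by convert rfl)
        refine ⟨F, fun a ha => ?_, hF2⟩
        have := hF1 ha
        rw [edgeSet_deleteEdges] at this
        exact this.1
open SimpleGraph in
lemma gr_insert {F : Finset (Sym2 V)} {u v : V} :
    SimpleGraph.fromEdgeSet (↑(insert s(u, v) F) : Set (Sym2 V)) =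
      SimpleGraph.fromEdgeSet (↑F : Set (Sym2 V)) ⊔ SimpleGraph.edge u v := by
  rw [SimpleGraph.edge, Finset.coe_insert, Set.insert_eq, Set.union_comm, fromEdgeSet_union]

open SimpleGraph in
/-- Adding an edge between two vertices in different components of an acyclic graph
keeps it acyclic. -/
lemma isAcyclic_sup_edge {H : SimpleGraph V} (hH : H.IsAcyclic) {u v : V}
    (hne : u ≠ v) (huv : ¬H.Reachable u v) : (H ⊔ SimpleGraph.edge u v).IsAcyclic := by
  have hnadj : ¬H.Adj u v := fun h => huv h.reachable
  have hdel : (H ⊔ SimpleGraph.edge u v) \ fromEdgeSet {s(u, v)} = H := by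
    ext x y
    simp only [sdiff_adj, sup_adj, edge_adj, fromEdgeSet_adj, Set.mem_singleton_iff]
    constructor
    · rintro ⟨hA | ⟨⟨rfl, rfl⟩ | ⟨rfl, rfl⟩, hxy⟩, hne'⟩
      · exact hA
      · exact (hne' ⟨rfl, hxy⟩).elim
      · exact (hne' ⟨Sym2.eq_swap, hxy⟩).elim
    · intro hA
      refine ⟨Or.inl hA, ?_⟩
      rintro ⟨hs, -⟩
      rw [Sym2.eq_iff] at hs
      rcases hs with ⟨rfl, rfl⟩ | ⟨rfl, rfl⟩
      · exact hnadj hA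
      · exact hnadj hA.symm
  have hbridge : (H ⊔ SimpleGraph.edge u v).IsBridge s(u, v) := by
    rw [isBridge_iff]
    rw [deleteEdges, hdel]; exact huv
  rw [isBridge_iff_adj_and_forall_cycle_notMem (Or.inr ((edge_adj u v u v).2 ⟨Or.inl ⟨rfl, rfl⟩, hne⟩))] at hbridge
  intro a c hc
  have hmem : s(u, v) ∉ c.edges := hbridge c hc
  have hsub : ∀ s ∈ c.edges, s ∈ H.edgeSet := by
    intro s hs
    have := c.edges_subset_edgeSet hs
    rw [edgeSet_sup, edge_edgeSet_of_ne hne] at this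
    rcases this with h | h
    · exact h
    · exact absurd (h ▸ hs) hmem
  exact hH _ (hc.transfer hsub)
open SimpleGraph in
lemma twoForest_not_reach {G : SimpleGraph V} {A B : Set V} {F : Finset (Sym2 V)}
    (hF : IsTwoTreeForest G A B F) {x y : V} (hx : x ∈ A) (hy : y ∈ B) :
    ¬(SimpleGraph.fromEdgeSet (↑F : Set (Sym2 V))).Reachable x y := by
  obtain ⟨-, -, u₀, v₀, hnr, -, hA, hB⟩ := hF
  intro hr
  exact hnr (((hA x hx).symm.trans hr).trans (hB y hy))

open SimpleGraph in
lemma twoForest_notmem_edge {G : SimpleGraph V} {A B : Set V} {F : Finset (Sym2 V)}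
    (hF : IsTwoTreeForest G A B F) {x y : V} (hx : x ∈ A) (hy : y ∈ B) :
    s(x, y) ∉ F := by
  intro hmem
  by_cases hxy : x = y
  · subst hxy
    exact twoForest_not_reach hF hx hy (Reachable.refl x)
  · exact twoForest_not_reach hF hx hy (Adj.reachable (gr_adj.2 ⟨hmem, hxy⟩))

open SimpleGraph in
/-- A spanning tree (connected graph) is never a two-tree forest. -/
lemma not_twoForest_of_connected {G : SimpleGraph V} {A B : Set V} {F : Finset (Sym2 V)}
    (hc : (SimpleGraph.fromEdgeSet (↑F : Set (Sym2 V))).Preconnected) :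
    ¬IsTwoTreeForest G A B F := by
  rintro ⟨-, -, u₀, v₀, hnr, -⟩
  exact hnr (hc u₀ v₀)

open SimpleGraph in
/-- The exchange bijection: multiplying the two-forest sum by the weight of the
exchanged edge gives the sum over spanning trees that split accordingly. -/
lemma key1 {G : SimpleGraph V} {i j u v : V} {A B : Set V}
    (hiA : i ∈ A) (hjB : j ∈ B) (huA : u ∈ A) (hvB : v ∈ B)
    (huv : u ≠ v) (hs : s(u, v) ∈ G.edgeSet) (hse : s(u, v) ≠ s(i, j)) (b : Sym2 V → ℝ) :
    b s(u, v) * ∑ F ∈ twoForests G A B, chi b F =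
      ∑ T ∈ (spanningTrees (G.deleteEdges {s(i, j)})).filter
        (fun T => T.erase s(u, v) ∈ twoForests G A B), chi b T := by
  classical
  rw [Finset.mul_sum]
  refine Finset.sum_nbij' (fun F => insert s(u, v) F) (fun T => T.erase s(u, v))
    ?_ ?_ ?_ ?_ ?_
  · -- forward membership
    intro F hF
    rw [mem_twoForests] at hF
    have hsF : s(u, v) ∉ F := twoForest_notmem_edge hF huA hvB
    have hijF : s(i, j) ∉ F := twoForest_notmem_edge hF hiA hjB
    obtain ⟨hsub, hac, u₀, v₀, hnr, hcov, hA, hB⟩ := hF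
    have hnr_uv : ¬(SimpleGraph.fromEdgeSet (↑F : Set (Sym2 V))).Reachable u v :=
      twoForest_not_reach ⟨hsub, hac, u₀, v₀, hnr, hcov, hA, hB⟩ huA hvB
    rw [Finset.mem_filter]
    constructor
    · rw [mem_spanningTrees]
      constructor
      · -- edges contained
        intro a ha
        rw [Finset.coe_insert, Set.mem_insert_iff] at ha
        rw [edgeSet_deleteEdges, Set.mem_diff]
        rcases ha with rfl | ha
        · exact ⟨hs, by simpa using hse⟩
        · refine ⟨hsub ha, ?_⟩
          simp only [Set.mem_singleton_iff]
          rintro rfl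
          exact hijF ha
      · -- tree
        rw [gr_insert]
        constructor
        · -- connected
          have hadj : (SimpleGraph.fromEdgeSet (↑F : Set (Sym2 V)) ⊔
              SimpleGraph.edge u v).Adj u v := by
            exact Or.inr ((edge_adj u v u v).2 ⟨Or.inl ⟨rfl, rfl⟩, huv⟩)
          have hle : SimpleGraph.fromEdgeSet (↑F : Set (Sym2 V)) ≤
              SimpleGraph.fromEdgeSet (↑F : Set (Sym2 V)) ⊔ SimpleGraph.edge u v :=
            le_sup_left
          have hall : ∀ x, (SimpleGraph.fromEdgeSet (↑F : Set (Sym2 V)) ⊔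
              SimpleGraph.edge u v).Reachable x u₀ := by
            intro x
            rcases hcov x with h | h
            · exact h.mono hle
            · exact ((h.mono hle).trans (((hB v hvB).mono hle).symm)).trans
                ((hadj.symm.reachable).trans ((hA u huA).mono hle))
          have : Nonempty V := ⟨u⟩
          exact Connected.mk fun x y => (hall x).trans (hall y).symm
        · exact isAcyclic_sup_edge hac huv hnr_uv
    · rw [Finset.erase_insert hsF, mem_twoForests]
      exact ⟨hsub, hac, u₀, v₀, hnr, hcov, hA, hB⟩
  · intro T hT
    exact (Finset.mem_filter.1 hT).2
  · intro F hF
    rw [mem_twoForests] at hF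
    exact Finset.erase_insert (twoForest_notmem_edge hF huA hvB)
  · intro T hT
    rw [Finset.mem_filter] at hT
    obtain ⟨hT1, hT2⟩ := hT
    have hsT : s(u, v) ∈ T := by
      by_contra hsT
      rw [Finset.erase_eq_of_notMem hsT, mem_twoForests] at hT2
      rw [mem_spanningTrees] at hT1
      exact not_twoForest_of_connected hT1.2.isConnected.preconnected hT2
    exact Finset.insert_erase hsT
  · intro F hF
    rw [mem_twoForests] at hF
    rw [chi, chi, Finset.prod_insert (twoForest_notmem_edge hF huA hvB)]
open SimpleGraph in
lemma twoForest_mono {G : SimpleGraph V} {A A' B B' : Set V} {F : Finset (Sym2 V)}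
    (hA : A ⊆ A') (hB : B ⊆ B') (hF : IsTwoTreeForest G A' B' F) :
    IsTwoTreeForest G A B F := by
  obtain ⟨h1, h2, u₀, v₀, h3, h4, h5, h6⟩ := hF
  exact ⟨h1, h2, u₀, v₀, h3, h4, fun x hx => h5 x (hA hx), fun x hx => h6 x (hB hx)⟩

open SimpleGraph in
lemma partition_twoForests (G : SimpleGraph V) {A : Set V} (B : Set V)
    (hA : A.Nonempty) (y : V) (b : Sym2 V → ℝ) :
    ∑ F ∈ twoForests G A B, chi b F =
      (∑ F ∈ twoForests G (insert y A) B, chi b F) +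
        ∑ F ∈ twoForests G A (insert y B), chi b F := by
  classical
  have hun : twoForests G A B =
      twoForests G (insert y A) B ∪ twoForests G A (insert y B) := by
    ext F
    simp only [Finset.mem_union, mem_twoForests]
    constructor
    · intro hF
      obtain ⟨h1, h2, u₀, v₀, h3, h4, h5, h6⟩ := hF
      rcases h4 y with hy | hy
      · refine Or.inl ⟨h1, h2, u₀, v₀, h3, h4, ?_, h6⟩
        intro x hx
        rcases Set.mem_insert_iff.1 hx with rfl | hx
        · exact hy
        · exact h5 x hx
      · refine Or.inr ⟨h1, h2, u₀, v₀, h3, h4, h5, ?_⟩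
        intro x hx
        rcases Set.mem_insert_iff.1 hx with rfl | hx
        · exact hy
        · exact h6 x hx
    · rintro (hF | hF)
      · exact twoForest_mono (Set.subset_insert y A) subset_rfl hF
      · exact twoForest_mono subset_rfl (Set.subset_insert y B) hF
  have hdisj : Disjoint (twoForests G (insert y A) B) (twoForests G A (insert y B)) := by
    rw [Finset.disjoint_left]
    intro F hF1 hF2
    rw [mem_twoForests] at hF1 hF2
    obtain ⟨a, ha⟩ := hA
    obtain ⟨-, -, u₀, v₀, h3, -, h5, h6⟩ := hF1
    obtain ⟨-, -, u₁, v₁, h3', -, h5', h6'⟩ := hF2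
    have hau₀ := h5 a (Set.mem_insert_of_mem y ha)
    have hau₁ := h5' a ha
    have hyu₀ := h5 y (Set.mem_insert y A)
    have hyv₁ := h6' y (Set.mem_insert y B)
    exact h3' ((((hau₁.symm.trans hau₀).trans hyu₀.symm).trans hyv₁))
  rw [hun, Finset.sum_union hdisj]
open SimpleGraph in
lemma twoForest_reach_left {G : SimpleGraph V} {A B : Set V} {F : Finset (Sym2 V)}
    (hF : IsTwoTreeForest G A B F) {x y : V} (hx : x ∈ A) (hy : y ∈ A) :
    (SimpleGraph.fromEdgeSet (↑F : Set (Sym2 V))).Reachable x y := by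
  obtain ⟨-, -, u₀, v₀, -, -, hA, -⟩ := hF
  exact (hA x hx).trans (hA y hy).symm

open SimpleGraph in
lemma twoForest_reach_right {G : SimpleGraph V} {A B : Set V} {F : Finset (Sym2 V)}
    (hF : IsTwoTreeForest G A B F) {x y : V} (hx : x ∈ B) (hy : y ∈ B) :
    (SimpleGraph.fromEdgeSet (↑F : Set (Sym2 V))).Reachable x y := by
  obtain ⟨-, -, u₀, v₀, -, -, -, hB⟩ := hF
  exact (hB x hx).trans (hB y hy).symm

open SimpleGraph in
lemma not_twoForest_mem_both {G : SimpleGraph V} {A B : Set V} {F : Finset (Sym2 V)}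
    {x : V} (hx : x ∈ A) (hy : x ∈ B) : ¬IsTwoTreeForest G A B F :=
  fun hF => twoForest_not_reach hF hx hy (SimpleGraph.Reachable.refl x)

open SimpleGraph in
lemma isAcyclic_mono {H K : SimpleGraph V} (hle : H ≤ K) (hK : K.IsAcyclic) :
    H.IsAcyclic := by
  intro a c hc
  exact hK (c.transfer K fun s hs => (edgeSet_subset_edgeSet.2 hle) (c.edges_subset_edgeSet hs))
    (hc.transfer _)

open SimpleGraph in
/-- Transporting the distinguished vertex of a two-tree forest along reachability. -/
lemma twoForest_congr {G : SimpleGraph V} {S B : Set V} {F : Finset (Sym2 V)} {c c' : V}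
    (h : (SimpleGraph.fromEdgeSet (↑F : Set (Sym2 V))).Reachable c c')
    (hF : IsTwoTreeForest G (insert c S) B F) : IsTwoTreeForest G (insert c' S) B F := by
  obtain ⟨h1, h2, u₀, v₀, h3, h4, h5, h6⟩ := hF
  refine ⟨h1, h2, u₀, v₀, h3, h4, ?_, h6⟩
  intro x hx
  rcases Set.mem_insert_iff.1 hx with rfl | hx
  · exact h.symm.trans (h5 c (Set.mem_insert c S))
  · exact h5 x (Set.mem_insert_of_mem c hx)

open Classical in
/-- The sign with which a spanning tree `T`, cut at the edge `s(u,v)`, contributes: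
`+1` if `c,u` end up together and `j,v` together, `-1` in the opposite case, else `0`. -/
noncomputable def eps (G : SimpleGraph V) (j c : V) (T : Finset (Sym2 V)) (u v : V) : ℝ :=
  (if T.erase s(u, v) ∈ twoForests G {c, u} {j, v} then (1 : ℝ) else 0) -
    (if T.erase s(u, v) ∈ twoForests G {c, v} {j, u} then 1 else 0)

open SimpleGraph in
lemma eps_swap {G : SimpleGraph V} {j c : V} {T : Finset (Sym2 V)} {u v : V} :
    eps G j c T v u = -eps G j c T u v := by
  rw [eps, eps, Sym2.eq_swap]
  ring

open SimpleGraph in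
lemma eps_self {G : SimpleGraph V} {j : V} {T : Finset (Sym2 V)} {u v : V} :
    eps G j j T u v = 0 := by
  rw [eps, if_neg, if_neg]
  · simp
  · rw [mem_twoForests]
    exact not_twoForest_mem_both (Set.mem_insert j _) (Set.mem_insert j _)
  · rw [mem_twoForests]
    exact not_twoForest_mem_both (Set.mem_insert j _) (Set.mem_insert j _)

open SimpleGraph in
lemma eps_congr {G : SimpleGraph V} {j c c' : V} {T : Finset (Sym2 V)} {u v : V}
    (h : (SimpleGraph.fromEdgeSet (↑(T.erase s(u, v)) : Set (Sym2 V))).Reachable c c') :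
    eps G j c T u v = eps G j c' T u v := by
  rw [eps, eps]
  congr 2
  · apply propext
    simp only [mem_twoForests]
    exact ⟨fun hF => twoForest_congr h hF, fun hF => twoForest_congr h.symm hF⟩
  · apply propext
    simp only [mem_twoForests]
    exact ⟨fun hF => twoForest_congr h hF, fun hF => twoForest_congr h.symm hF⟩
open SimpleGraph

section cut
variable {G : SimpleGraph V} {T : Finset (Sym2 V)} {c c₁ j : V}

lemma cut_not_reach (hT : (SimpleGraph.fromEdgeSet (↑T : Set (Sym2 V))).IsTree)
    (hadj : (SimpleGraph.fromEdgeSet (↑T : Set (Sym2 V))).Adj c c₁) :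
    ¬(SimpleGraph.fromEdgeSet (↑(T.erase s(c, c₁)) : Set (Sym2 V))).Reachable c c₁ := by
  have hbr := isAcyclic_iff_forall_adj_isBridge.1 hT.IsAcyclic hadj
  rw [isBridge_iff] at hbr
  rw [gr_erase]
  exact hbr

lemma cut_cover (hT : (SimpleGraph.fromEdgeSet (↑T : Set (Sym2 V))).IsTree) (y : V) :
    (SimpleGraph.fromEdgeSet (↑(T.erase s(c, c₁)) : Set (Sym2 V))).Reachable y c ∨
      (SimpleGraph.fromEdgeSet (↑(T.erase s(c, c₁)) : Set (Sym2 V))).Reachable y c₁ := by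
  obtain ⟨w⟩ := hT.isConnected.preconnected y c
  rw [gr_erase]
  rcases reach_cover w c c₁ with h | h | h
  · exact Or.inl h
  · exact Or.inl h
  · exact Or.inr h

lemma cut_isTwoTreeForest (hTsub : ↑T ⊆ G.edgeSet)
    (hT : (SimpleGraph.fromEdgeSet (↑T : Set (Sym2 V))).IsTree)
    (hadj : (SimpleGraph.fromEdgeSet (↑T : Set (Sym2 V))).Adj c c₁)
    (hjq : (SimpleGraph.fromEdgeSet (↑(T.erase s(c, c₁)) : Set (Sym2 V))).Reachable j c₁) :
    IsTwoTreeForest G {c, c} {j, c₁} (T.erase s(c, c₁)) := by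
  refine ⟨?_, ?_, c, c₁, cut_not_reach hT hadj, cut_cover hT, ?_, ?_⟩
  · exact fun a ha => hTsub (Finset.erase_subset _ _ ha)
  · exact isAcyclic_mono (fromEdgeSet_mono (by exact_mod_cast Finset.erase_subset _ _))
      hT.IsAcyclic
  · intro x hx
    rcases hx with rfl | hx
    · exact Reachable.refl _
    · rcases hx with rfl
      exact Reachable.refl _
  · intro x hx
    rcases hx with rfl | hx
    · exact hjq
    · rcases hx with rfl
      exact Reachable.refl _

lemma eps_cut₁ (hTsub : ↑T ⊆ G.edgeSet)
    (hT : (SimpleGraph.fromEdgeSet (↑T : Set (Sym2 V))).IsTree)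
    (hadj : (SimpleGraph.fromEdgeSet (↑T : Set (Sym2 V))).Adj c c₁)
    (hjq : (SimpleGraph.fromEdgeSet (↑(T.erase s(c, c₁)) : Set (Sym2 V))).Reachable j c₁) :
    eps G j c T c c₁ = 1 := by
  rw [eps, if_pos, if_neg]
  · ring
  · rw [mem_twoForests]
    intro hF
    exact cut_not_reach hT hadj
      (twoForest_reach_left hF (Set.mem_insert c _) (by right; rfl))
  · rw [mem_twoForests]
    exact cut_isTwoTreeForest hTsub hT hadj hjq

lemma eps_cut₂ (hT : (SimpleGraph.fromEdgeSet (↑T : Set (Sym2 V))).IsTree)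
    (hadj : (SimpleGraph.fromEdgeSet (↑T : Set (Sym2 V))).Adj c c₁)
    (hjq : (SimpleGraph.fromEdgeSet (↑(T.erase s(c, c₁)) : Set (Sym2 V))).Reachable j c₁) :
    eps G j c₁ T c c₁ = 0 := by
  rw [eps, if_neg, if_neg]
  · ring
  · rw [mem_twoForests]
    intro hF
    exact cut_not_reach hT hadj
      ((hjq.symm.trans (twoForest_reach_right hF (Set.mem_insert j _) (by right; rfl))).symm)
  · rw [mem_twoForests]
    intro hF
    exact cut_not_reach hT hadj
      (twoForest_reach_left hF (Set.mem_insert_of_mem _ rfl) (Set.mem_insert c₁ _))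

end cut
open SimpleGraph in
/-- Telescoping of the cut signs along a path from `c` to `j` in a spanning tree. -/
lemma telescope (G : SimpleGraph V) [Fintype ↥G.edgeSet] (src tgt : ↥G.edgeSet → V)
    (horient : ∀ a : ↥G.edgeSet, (a : Sym2 V) = s(src a, tgt a))
    {T : Finset (Sym2 V)} (hTsub : ↑T ⊆ G.edgeSet)
    (hT : (SimpleGraph.fromEdgeSet (↑T : Set (Sym2 V))).IsTree) (j x : V) :
    ∀ (c : V) (p : (SimpleGraph.fromEdgeSet (↑T : Set (Sym2 V))).Walk c j), p.IsPath →
      ∑ a : ↥G.edgeSet,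
          ((if x = src a then (1 : ℝ) else 0) - (if x = tgt a then 1 else 0)) *
            eps G j c T (src a) (tgt a) =
        (if x = c then 1 else 0) - (if x = j then 1 else 0) := by
  intro c p
  induction p with
  | nil =>
    intro _
    rw [Finset.sum_eq_zero fun a _ => by rw [eps_self, mul_zero]]
    simp
  | @cons c c₂ j hadj q ih =>
    intro hp
    rw [Walk.cons_isPath_iff] at hp
    obtain ⟨hq, hcsup⟩ := hp
    have hih := ih hq
    have hcc₂ : c ≠ c₂ := hadj.ne
    have hmemT : s(c, c₂) ∈ T := (gr_adj.1 hadj).1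
    have hjq : (SimpleGraph.fromEdgeSet (↑(T.erase s(c, c₂)) : Set (Sym2 V))).Reachable j c₂ := by
      have hav : ∀ s' ∈ q.edges, s' ∉ ({s(c, c₂)} : Set (Sym2 V)) := by
        intro s' hs' hmem
        rw [Set.mem_singleton_iff] at hmem
        subst hmem
        exact hcsup (Walk.fst_mem_support_of_mem_edges q hs')
      rw [gr_erase]
      exact (Walk.toDeleteEdges {s(c, c₂)} q hav).reachable.symm
    set a₀ : ↥G.edgeSet := ⟨s(c, c₂), hTsub hmemT⟩ with ha₀
    have hdiff : ∀ a : ↥G.edgeSet, a ≠ a₀ →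
        eps G j c T (src a) (tgt a) = eps G j c₂ T (src a) (tgt a) := by
      intro a hne
      have hsne : s(c, c₂) ≠ s(src a, tgt a) := by
        intro h
        exact hne (Subtype.ext (by rw [horient a, ← h]))
      apply eps_congr
      refine Adj.reachable (gr_adj.2 ⟨Finset.mem_erase.2 ⟨hsne, hmemT⟩, hcc₂⟩)
    have hor : s(src a₀, tgt a₀) = s(c, c₂) := (horient a₀).symm
    have hterm₀ :
        ((if x = src a₀ then (1 : ℝ) else 0) - (if x = tgt a₀ then 1 else 0)) *
            eps G j c T (src a₀) (tgt a₀) -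
          ((if x = src a₀ then (1 : ℝ) else 0) - (if x = tgt a₀ then 1 else 0)) *
            eps G j c₂ T (src a₀) (tgt a₀) =
          (if x = c then 1 else 0) - (if x = c₂ then 1 else 0) := by
      rw [Sym2.eq_iff] at hor
      rcases hor with ⟨h1, h2⟩ | ⟨h1, h2⟩
      · rw [h1, h2, eps_cut₁ hTsub hT hadj hjq, eps_cut₂ hT hadj hjq]
        ring
      · rw [h1, h2, show eps G j c T c₂ c = -eps G j c T c c₂ from eps_swap,
          show eps G j c₂ T c₂ c = -eps G j c₂ T c c₂ from eps_swap,
          eps_cut₁ hTsub hT hadj hjq, eps_cut₂ hT hadj hjq]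
        ring
    have hsum :
        (∑ a : ↥G.edgeSet,
            ((if x = src a then (1 : ℝ) else 0) - (if x = tgt a then 1 else 0)) *
              eps G j c T (src a) (tgt a)) -
          ∑ a : ↥G.edgeSet,
            ((if x = src a then (1 : ℝ) else 0) - (if x = tgt a then 1 else 0)) *
              eps G j c₂ T (src a) (tgt a) =
          (if x = c then 1 else 0) - (if x = c₂ then 1 else 0) := by
      rw [← Finset.sum_sub_distrib]
      rw [Finset.sum_eq_single a₀]
      · exact hterm₀
      · intro a _ hne
        rw [hdiff a hne]
        ring
      · intro h
        exact absurd (Finset.mem_univ a₀) h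
    linarith [hih, hsum]
open SimpleGraph in
/-- The combinatorial core: the reduced Laplacian applied to
`h : u ↦ Σ_{F ∈ T({i,u},{j})} χ(F)` equals the spanning-tree sum times `χ_i - χ_j`. -/
lemma laplacian_h (G : SimpleGraph V) [Fintype ↥G.edgeSet]
    (src tgt : ↥G.edgeSet → V)
    (horient : ∀ a : ↥G.edgeSet, (a : Sym2 V) = s(src a, tgt a))
    (b : Sym2 V → ℝ) (e : ↥G.edgeSet) (i j : V)
    (he_s : (e : Sym2 V) = s(i, j)) (x : V) :
    ∑ a : ↥G.edgeSet, (if a = e then 0 else b (a : Sym2 V)) *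
        (((if x = src a then (1 : ℝ) else 0) - (if x = tgt a then 1 else 0)) *
          ((∑ F ∈ twoForests G {i, src a} {j}, chi b F) -
            ∑ F ∈ twoForests G {i, tgt a} {j}, chi b F)) =
      (∑ T ∈ spanningTrees (G.deleteEdges {s(i, j)}), chi b T) *
        ((if x = i then 1 else 0) - (if x = j then 1 else 0)) := by
  classical
  have hne_st : ∀ a : ↥G.edgeSet, src a ≠ tgt a := by
    intro a
    have : G.Adj (src a) (tgt a) := by
      rw [← mem_edgeSet, ← horient a]
      exact a.2
    exact this.ne
  have hTsubG : ∀ T ∈ spanningTrees (G.deleteEdges {s(i, j)}), ↑T ⊆ G.edgeSet ∧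
      s(i, j) ∉ T ∧ (SimpleGraph.fromEdgeSet (↑T : Set (Sym2 V))).IsTree := by
    intro T hT
    rw [mem_spanningTrees] at hT
    obtain ⟨hT1, hT2⟩ := hT
    rw [edgeSet_deleteEdges] at hT1
    refine ⟨fun s hs => (hT1 hs).1, fun hmem => (hT1 hmem).2 rfl, hT2⟩
  have per_a : ∀ a : ↥G.edgeSet,
      (if a = e then 0 else b (a : Sym2 V)) *
          ((∑ F ∈ twoForests G {i, src a} {j}, chi b F) -
            ∑ F ∈ twoForests G {i, tgt a} {j}, chi b F) =
        ∑ T ∈ spanningTrees (G.deleteEdges {s(i, j)}),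
          chi b T * eps G j i T (src a) (tgt a) := by
    intro a
    by_cases hae : a = e
    · subst hae
      rw [if_pos rfl, zero_mul]
      symm
      apply Finset.sum_eq_zero
      intro T hT
      obtain ⟨-, hnm, hTtree⟩ := hTsubG T hT
      have hsa : s(src a, tgt a) = s(i, j) := by rw [← horient a, he_s]
      rw [eps, hsa, Finset.erase_eq_of_notMem hnm, if_neg, if_neg, sub_zero, mul_zero]
      · rw [mem_twoForests]
        exact not_twoForest_of_connected hTtree.isConnected.preconnected
      · rw [mem_twoForests]
        exact not_twoForest_of_connected hTtree.isConnected.preconnected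
    · rw [if_neg hae]
      set u := src a with hu
      set v := tgt a with hv
      have huv : u ≠ v := hne_st a
      have hsa : s(u, v) = (a : Sym2 V) := (horient a).symm
      have hs : s(u, v) ∈ G.edgeSet := by rw [hsa]; exact a.2
      have hse : s(u, v) ≠ s(i, j) := by
        rw [hsa, ← he_s]
        exact fun h => hae (Subtype.ext h)
      have hp1 := partition_twoForests G (A := {i, u}) {j} ⟨i, Set.mem_insert i _⟩ v b
      have hp2 := partition_twoForests G (A := {i, v}) {j} ⟨i, Set.mem_insert i _⟩ u b
      have hsets : (insert v {i, u} : Set V) = insert u {i, v} := by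
        ext y
        simp only [Set.mem_insert_iff, Set.mem_singleton_iff]
        tauto
      have hjv : (insert v ({j} : Set V)) = {j, v} := Set.pair_comm v j
      have hju : (insert u ({j} : Set V)) = {j, u} := Set.pair_comm u j
      rw [hsets, hjv] at hp1
      rw [hju] at hp2
      have hk1 := key1 (G := G) (i := i) (j := j) (u := u) (v := v)
        (A := {i, u}) (B := {j, v}) (Set.mem_insert i _) (Set.mem_insert j _)
        (Set.mem_insert_of_mem _ rfl) (Set.mem_insert_of_mem _ rfl) huv hs hse b
      have hk2 := key1 (G := G) (i := i) (j := j) (u := v) (v := u)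
        (A := {i, v}) (B := {j, u}) (Set.mem_insert i _) (Set.mem_insert j _)
        (Set.mem_insert_of_mem _ rfl) (Set.mem_insert_of_mem _ rfl) huv.symm
        (by rwa [Sym2.eq_swap]) (by rwa [Sym2.eq_swap]) b
      rw [Sym2.eq_swap] at hk2
      have hbs : b (a : Sym2 V) = b s(u, v) := by rw [hsa]
      rw [hbs, hp1, hp2]
      have : b s(u, v) * ((∑ F ∈ twoForests G (insert u {i, v}) {j}, chi b F) +
            (∑ F ∈ twoForests G {i, u} {j, v}, chi b F) -
          ((∑ F ∈ twoForests G (insert u {i, v}) {j}, chi b F) +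
            ∑ F ∈ twoForests G {i, v} {j, u}, chi b F)) =
          b s(u, v) * (∑ F ∈ twoForests G {i, u} {j, v}, chi b F) -
            b s(u, v) * ∑ F ∈ twoForests G {i, v} {j, u}, chi b F := by ring
      rw [this, hk1, hk2, Finset.sum_filter, Finset.sum_filter, ← Finset.sum_sub_distrib]
      apply Finset.sum_congr rfl
      intro T _
      rw [eps]
      by_cases h1 : T.erase s(u, v) ∈ twoForests G {i, u} {j, v} <;>
        by_cases h2 : T.erase s(u, v) ∈ twoForests G {i, v} {j, u} <;>
        simp [h1, h2]
  calc ∑ a : ↥G.edgeSet, (if a = e then 0 else b (a : Sym2 V)) *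
        (((if x = src a then (1 : ℝ) else 0) - (if x = tgt a then 1 else 0)) *
          ((∑ F ∈ twoForests G {i, src a} {j}, chi b F) -
            ∑ F ∈ twoForests G {i, tgt a} {j}, chi b F))
      = ∑ a : ↥G.edgeSet, ((if x = src a then (1 : ℝ) else 0) - (if x = tgt a then 1 else 0)) *
          ∑ T ∈ spanningTrees (G.deleteEdges {s(i, j)}),
            chi b T * eps G j i T (src a) (tgt a) := by
        apply Finset.sum_congr rfl
        intro a _
        rw [← per_a a]
        ring
    _ = ∑ T ∈ spanningTrees (G.deleteEdges {s(i, j)}), chi b T *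
          ∑ a : ↥G.edgeSet, ((if x = src a then (1 : ℝ) else 0) -
            (if x = tgt a then 1 else 0)) * eps G j i T (src a) (tgt a) := by
        simp_rw [Finset.mul_sum]
        rw [Finset.sum_comm]
        apply Finset.sum_congr rfl
        intro T _
        apply Finset.sum_congr rfl
        intro a _
        ring
    _ = ∑ T ∈ spanningTrees (G.deleteEdges {s(i, j)}), chi b T *
          ((if x = i then 1 else 0) - (if x = j then 1 else 0)) := by
        apply Finset.sum_congr rfl
        intro T hT
        obtain ⟨hTsub, -, hTtree⟩ := hTsubG T hT
        obtain ⟨p, hp, -⟩ := hTtree.existsUnique_path i j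
        rw [telescope G src tgt horient hTsub hTtree j x i p hp]
    _ = _ := by rw [← Finset.sum_mul]
open Matrix in
lemma sum_incidence_col {s t : V} (hst : s ≠ t) (θ : V → ℝ) :
    ∑ v : V, (if v = s then (1 : ℝ) else if v = t then -1 else 0) * θ v = θ s - θ t := by
  have hfun : ∀ v, (if v = s then (1 : ℝ) else if v = t then -1 else 0) * θ v =
      (if v = s then θ v else 0) + (if v = t then -θ v else 0) := by
    intro v
    by_cases h1 : v = s
    · subst h1
      rw [if_pos rfl, if_pos rfl, if_neg hst]
      ring
    · rw [if_neg h1, if_neg h1]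
      by_cases h2 : v = t
      · subst h2
        rw [if_pos rfl, if_pos rfl]
        ring
      · rw [if_neg h2, if_neg h2]
        ring
  simp_rw [hfun]
  rw [Finset.sum_add_distrib, Finset.sum_ite_eq' Finset.univ s θ,
    Finset.sum_ite_eq' Finset.univ t (fun v => -θ v)]
  simp
  ring

open Matrix in
lemma CT_mulVec {G : SimpleGraph V} [Fintype ↥G.edgeSet] (src tgt : ↥G.edgeSet → V)
    (hst : ∀ a : ↥G.edgeSet, src a ≠ tgt a) (θ : V → ℝ) (a : ↥G.edgeSet) :
    ((incidenceMatrix src tgt)ᵀ *ᵥ θ) a = θ (src a) - θ (tgt a) := by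
  rw [← sum_incidence_col (hst a) θ]
  simp [Matrix.mulVec, dotProduct, incidenceMatrix, Matrix.transpose_apply]

open Matrix in
lemma L_mulVec {G : SimpleGraph V} [Fintype ↥G.edgeSet] (src tgt : ↥G.edgeSet → V)
    (hst : ∀ a : ↥G.edgeSet, src a ≠ tgt a) (d : ↥G.edgeSet → ℝ) (θ : V → ℝ) (x : V) :
    ((incidenceMatrix src tgt * Matrix.diagonal d * (incidenceMatrix src tgt)ᵀ) *ᵥ θ) x =
      ∑ a : ↥G.edgeSet, d a *
        (((if x = src a then (1 : ℝ) else 0) - (if x = tgt a then 1 else 0)) *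
          (θ (src a) - θ (tgt a))) := by
  rw [← Matrix.mulVec_mulVec, ← Matrix.mulVec_mulVec]
  have h1 : ∀ a : ↥G.edgeSet, (Matrix.diagonal d *ᵥ ((incidenceMatrix src tgt)ᵀ *ᵥ θ)) a =
      d a * (θ (src a) - θ (tgt a)) := by
    intro a
    rw [Matrix.mulVec_diagonal, CT_mulVec src tgt hst]
  rw [Matrix.mulVec]
  have : ∀ a : ↥G.edgeSet, incidenceMatrix src tgt x a =
      ((if x = src a then (1 : ℝ) else 0) - (if x = tgt a then 1 else 0)) := by
    intro a
    rw [incidenceMatrix, Matrix.of_apply]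
    by_cases hxs : x = src a
    · rw [if_pos hxs, if_pos hxs, if_neg (hxs ▸ hst a)]
      ring
    · rw [if_neg hxs, if_neg hxs]
      by_cases hxt : x = tgt a
      · rw [if_pos hxt, if_pos hxt]; ring
      · rw [if_neg hxt, if_neg hxt]; ring
  rw [dotProduct]
  apply Finset.sum_congr rfl
  intro a _
  rw [h1 a, this a]
  ring
lemma sum_ind_mul {s t : V} (hst : s ≠ t) (v : V → ℝ) :
    ∑ x : V, ((if x = s then (1 : ℝ) else 0) - (if x = t then 1 else 0)) * v x =
      v s - v t := by
  have hfun : ∀ x, ((if x = s then (1 : ℝ) else 0) - (if x = t then 1 else 0)) * v x =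
      (if x = s then v x else 0) + (if x = t then -v x else 0) := by
    intro x
    by_cases h1 : x = s
    · subst h1
      rw [if_pos rfl, if_pos rfl, if_neg hst, if_neg hst]
      ring
    · rw [if_neg h1, if_neg h1]
      by_cases h2 : x = t
      · subst h2
        rw [if_pos rfl, if_pos rfl]
        ring
      · rw [if_neg h2, if_neg h2]
        ring
  simp_rw [hfun]
  rw [Finset.sum_add_distrib, Finset.sum_ite_eq' Finset.univ s v,
    Finset.sum_ite_eq' Finset.univ t (fun x => -v x)]
  simp
  ring

open SimpleGraph in
/-- If a vector is harmonic for the weighted Laplacian (with nonnegative weights),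
then it is constant across every edge of positive weight. -/
lemma kernel_const {G : SimpleGraph V} [Fintype ↥G.edgeSet] (src tgt : ↥G.edgeSet → V)
    (hst : ∀ a : ↥G.edgeSet, src a ≠ tgt a)
    (d : ↥G.edgeSet → ℝ) (hd : ∀ a, 0 ≤ d a) (v : V → ℝ)
    (hv : ∀ x : V, ∑ a : ↥G.edgeSet, d a *
      (((if x = src a then (1 : ℝ) else 0) - (if x = tgt a then 1 else 0)) *
        (v (src a) - v (tgt a))) = 0)
    (a : ↥G.edgeSet) (ha : 0 < d a) : v (src a) = v (tgt a) := by
  have henergy : ∑ a : ↥G.edgeSet, d a * (v (src a) - v (tgt a)) ^ 2 = 0 := by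
    have h0 : ∑ x : V, v x * (∑ a : ↥G.edgeSet, d a *
        (((if x = src a then (1 : ℝ) else 0) - (if x = tgt a then 1 else 0)) *
          (v (src a) - v (tgt a)))) = 0 := by
      apply Finset.sum_eq_zero
      intro x _
      rw [hv x, mul_zero]
    rw [← h0]
    simp_rw [Finset.mul_sum]
    rw [Finset.sum_comm]
    apply Finset.sum_congr rfl
    intro a' _
    have : ∑ x : V, v x * (d a' * (((if x = src a' then (1 : ℝ) else 0) -
        (if x = tgt a' then 1 else 0)) * (v (src a') - v (tgt a')))) =
        d a' * (v (src a') - v (tgt a')) *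
          ∑ x : V, ((if x = src a' then (1 : ℝ) else 0) -
            (if x = tgt a' then 1 else 0)) * v x := by
      rw [Finset.mul_sum]
      apply Finset.sum_congr rfl
      intro x _
      ring
    rw [this, sum_ind_mul (hst a') v]
    ring
  have hterm : ∀ a' : ↥G.edgeSet, a' ∈ Finset.univ →
      0 ≤ d a' * (v (src a') - v (tgt a')) ^ 2 := by
    intro a' _
    exact mul_nonneg (hd a') (sq_nonneg _)
  have := (Finset.sum_eq_zero_iff_of_nonneg hterm).1 henergy a (Finset.mem_univ a)
  have hsq : (v (src a) - v (tgt a)) ^ 2 = 0 := by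
    by_contra hne
    have : 0 < (v (src a) - v (tgt a)) ^ 2 := lt_of_le_of_ne (sq_nonneg _) (Ne.symm hne)
    nlinarith
  have := sq_eq_zero_iff.1 hsq
  linarith [this]

open SimpleGraph in
lemma const_of_reachable {H : SimpleGraph V} (v : V → ℝ)
    (hadj : ∀ x y : V, H.Adj x y → v x = v y) {x y : V} (h : H.Reachable x y) :
    v x = v y := by
  obtain ⟨w⟩ := h
  induction w with
  | nil => rfl
  | cons h' w ih => rw [hadj _ _ h', ih]

open SimpleGraph in
lemma h_diff (G : SimpleGraph V) (b : Sym2 V → ℝ) (i j u v : V) :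
    (∑ F ∈ twoForests G {i, u} {j}, chi b F) -
        (∑ F ∈ twoForests G {i, v} {j}, chi b F) =
      (∑ F ∈ twoForests G {i, u} {j, v}, chi b F) -
        ∑ F ∈ twoForests G {i, v} {j, u}, chi b F := by
  have hp1 := partition_twoForests G (A := {i, u}) {j} ⟨i, Set.mem_insert i _⟩ v b
  have hp2 := partition_twoForests G (A := {i, v}) {j} ⟨i, Set.mem_insert i _⟩ u b
  have hsets : (insert v {i, u} : Set V) = insert u {i, v} := by
    ext y
    simp only [Set.mem_insert_iff, Set.mem_singleton_iff]
    tauto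
  have hjv : (insert v ({j} : Set V)) = {j, v} := Set.pair_comm v j
  have hju : (insert u ({j} : Set V)) = {j, u} := Set.pair_comm u j
  rw [hsets, hjv] at hp1
  rw [hju] at hp2
  rw [hp1, hp2]
  ring

open Matrix in
/-- For a connected simple graph `G` with oriented edges, positive
susceptances `b`, an edge `e = (i, j)` whose removal keeps `G` connected, a different
edge `ê = (w, z)`, a balanced injection `p`, and DC power-flow solutions `θ` for `G`
(`C B Cᵀ θ = p`) and `θ'` for `G' = G − e` (`C' B' C'ᵀ θ' = p`, encoded by zeroing out
the susceptance of `e`), the branch flow change on `ê` is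
`(B' C'ᵀ θ')_ê − (B Cᵀ θ)_ê = P_e · K_{e ê}` with `P_e = (B Cᵀ θ)_e` and `K_{e ê}` the
spanning-forest formula for the line outage distribution factor. -/
theorem branch_flow_change_eq_lodf
    (G : SimpleGraph V) (hG : G.Connected) [Fintype ↥G.edgeSet]
    (src tgt : ↥G.edgeSet → V)
    (horient : ∀ a : ↥G.edgeSet, (a : Sym2 V) = s(src a, tgt a))
    (b : Sym2 V → ℝ) (hb : ∀ a ∈ G.edgeSet, 0 < b a)
    (e ehat : ↥G.edgeSet) (hne : e ≠ ehat)
    (i j w z : V)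
    (hsrc_e : src e = i) (htgt_e : tgt e = j)
    (hsrc_ehat : src ehat = w) (htgt_ehat : tgt ehat = z)
    (hconn : (G.deleteEdges {(e : Sym2 V)}).Connected)
    (p : V → ℝ) (hp : ∑ k : V, p k = 0)
    (θ θ' : V → ℝ)
    (hθ : (incidenceMatrix src tgt *
        Matrix.diagonal (fun a : ↥G.edgeSet => b (a : Sym2 V)) *
        (incidenceMatrix src tgt)ᵀ) *ᵥ θ = p)
    (hθ' : (incidenceMatrix src tgt *
        Matrix.diagonal (fun a : ↥G.edgeSet => if a = e then 0 else b (a : Sym2 V)) *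
        (incidenceMatrix src tgt)ᵀ) *ᵥ θ' = p) :
    (Matrix.diagonal (fun a : ↥G.edgeSet => if a = e then 0 else b (a : Sym2 V)) *ᵥ
        ((incidenceMatrix src tgt)ᵀ *ᵥ θ')) ehat -
      (Matrix.diagonal (fun a : ↥G.edgeSet => b (a : Sym2 V)) *ᵥ
        ((incidenceMatrix src tgt)ᵀ *ᵥ θ)) ehat =
    (Matrix.diagonal (fun a : ↥G.edgeSet => b (a : Sym2 V)) *ᵥ
        ((incidenceMatrix src tgt)ᵀ *ᵥ θ)) e * lodf G b i j w z := by
  classical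
  have hst : ∀ a : ↥G.edgeSet, src a ≠ tgt a := by
    intro a
    have : G.Adj (src a) (tgt a) := by
      rw [← SimpleGraph.mem_edgeSet, ← horient a]
      exact a.2
    exact this.ne
  have he_s : (e : Sym2 V) = s(i, j) := by rw [horient e, hsrc_e, htgt_e]
  have hehat_s : (ehat : Sym2 V) = s(w, z) := by rw [horient ehat, hsrc_ehat, htgt_ehat]
  rw [he_s] at hconn
  -- positivity of the spanning tree sum
  set D : ℝ := ∑ T ∈ spanningTrees (G.deleteEdges {s(i, j)}), chi b T with hD_def
  have hchi_pos : ∀ T ∈ spanningTrees (G.deleteEdges {s(i, j)}), 0 < chi b T := by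
    intro T hT
    rw [mem_spanningTrees] at hT
    apply Finset.prod_pos
    intro a ha
    have := hT.1 ha
    rw [SimpleGraph.edgeSet_deleteEdges] at this
    exact hb a this.1
  have hD : 0 < D := by
    obtain ⟨F₀, hF₀sub, hF₀tree⟩ := exists_spanning_tree _ hconn
    have hmem : F₀ ∈ spanningTrees (G.deleteEdges {s(i, j)}) :=
      mem_spanningTrees.2 ⟨hF₀sub, hF₀tree⟩
    exact Finset.sum_pos hchi_pos ⟨F₀, hmem⟩
  -- the harmonic combination
  set Pe : ℝ := b (e : Sym2 V) * (θ i - θ j) with hPe_def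
  set h : V → ℝ := fun y => ∑ F ∈ twoForests G {i, y} {j}, chi b F with hh_def
  set φ : V → ℝ := fun y => D * (θ' y - θ y) - Pe * h y with hφ_def
  set d' : ↥G.edgeSet → ℝ := fun a => if a = e then 0 else b (a : Sym2 V) with hd'_def
  have hLθ : ∀ x : V, ∑ a : ↥G.edgeSet, b (a : Sym2 V) *
      (((if x = src a then (1 : ℝ) else 0) - (if x = tgt a then 1 else 0)) *
        (θ (src a) - θ (tgt a))) = p x := by
    intro x
    rw [← L_mulVec src tgt hst (fun a => b (a : Sym2 V)) θ x, hθ]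
  have hLθ' : ∀ x : V, ∑ a : ↥G.edgeSet, d' a *
      (((if x = src a then (1 : ℝ) else 0) - (if x = tgt a then 1 else 0)) *
        (θ' (src a) - θ' (tgt a))) = p x := by
    intro x
    rw [← L_mulVec src tgt hst d' θ' x, hθ']
  have hφ_harm : ∀ x : V, ∑ a : ↥G.edgeSet, d' a *
      (((if x = src a then (1 : ℝ) else 0) - (if x = tgt a then 1 else 0)) *
        (φ (src a) - φ (tgt a))) = 0 := by
    intro x
    have expand : ∀ a : ↥G.edgeSet, d' a *
        (((if x = src a then (1 : ℝ) else 0) - (if x = tgt a then 1 else 0)) *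
          (φ (src a) - φ (tgt a))) =
        D * (d' a * (((if x = src a then (1 : ℝ) else 0) - (if x = tgt a then 1 else 0)) *
            (θ' (src a) - θ' (tgt a)))) -
          D * (d' a * (((if x = src a then (1 : ℝ) else 0) - (if x = tgt a then 1 else 0)) *
            (θ (src a) - θ (tgt a)))) -
          Pe * (d' a * (((if x = src a then (1 : ℝ) else 0) - (if x = tgt a then 1 else 0)) *
            (h (src a) - h (tgt a)))) := by
      intro a
      simp only [hφ_def]
      ring
    simp_rw [expand]
    rw [Finset.sum_sub_distrib, Finset.sum_sub_distrib, ← Finset.mul_sum, ← Finset.mul_sum,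
      ← Finset.mul_sum, hLθ' x]
    have hlap := laplacian_h G src tgt horient b e i j he_s x
    simp only [hh_def, hd'_def] at *
    rw [hlap]
    -- remaining: the θ-sum with weights d'
    have hsplit : ∑ a : ↥G.edgeSet, (if a = e then (0:ℝ) else b (a : Sym2 V)) *
        (((if x = src a then (1 : ℝ) else 0) - (if x = tgt a then 1 else 0)) *
          (θ (src a) - θ (tgt a))) =
        p x - b (e : Sym2 V) * (((if x = i then (1 : ℝ) else 0) -
          (if x = j then 1 else 0)) * (θ i - θ j)) := by
      have hdiffsum : ∑ a : ↥G.edgeSet, (b (a : Sym2 V) *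
          (((if x = src a then (1 : ℝ) else 0) - (if x = tgt a then 1 else 0)) *
            (θ (src a) - θ (tgt a))) -
          (if a = e then (0:ℝ) else b (a : Sym2 V)) *
          (((if x = src a then (1 : ℝ) else 0) - (if x = tgt a then 1 else 0)) *
            (θ (src a) - θ (tgt a)))) =
          b (e : Sym2 V) * (((if x = i then (1 : ℝ) else 0) -
            (if x = j then 1 else 0)) * (θ i - θ j)) := by
        rw [Finset.sum_eq_single e]
        · rw [if_pos rfl, hsrc_e, htgt_e]
          ring
        · intro a _ hae
          rw [if_neg hae]
          ring
        · intro habs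
          exact absurd (Finset.mem_univ e) habs
      rw [Finset.sum_sub_distrib] at hdiffsum
      rw [hLθ x] at hdiffsum
      linarith [hdiffsum]
    rw [hsplit]
    ring
  -- φ is constant on the remaining connected graph
  have hd'_nonneg : ∀ a : ↥G.edgeSet, 0 ≤ d' a := by
    intro a
    simp only [hd'_def]
    split_ifs
    · exact le_refl 0
    · exact (hb _ a.2).le
  have hker := kernel_const src tgt hst d' hd'_nonneg φ hφ_harm
  have hadjφ : ∀ x y : V, (G.deleteEdges {s(i, j)}).Adj x y → φ x = φ y := by
    intro x y hxy
    have hxy' : s(x, y) ∈ (G.deleteEdges {s(i, j)}).edgeSet := (SimpleGraph.mem_edgeSet _).2 hxy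
    rw [SimpleGraph.edgeSet_deleteEdges] at hxy'
    obtain ⟨hmemG, hnij⟩ := hxy'
    set a : ↥G.edgeSet := ⟨s(x, y), hmemG⟩ with ha_def
    have hane : a ≠ e := by
      intro hcontra
      apply hnij
      rw [← he_s, ← hcontra]
      rfl
    have hd'pos : 0 < d' a := by
      simp only [hd'_def]
      rw [if_neg hane]
      exact hb _ hmemG
    have hor : s(src a, tgt a) = s(x, y) := (horient a).symm
    rw [Sym2.eq_iff] at hor
    rcases hor with ⟨h1, h2⟩ | ⟨h1, h2⟩
    · rw [← h1, ← h2]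
      exact hker a hd'pos
    · rw [← h1, ← h2]
      exact (hker a hd'pos).symm
  have hφwz : φ w = φ z :=
    const_of_reachable φ hadjφ (hconn.preconnected w z)
  -- final algebra
  have hkey : D * ((θ' w - θ' z) - (θ w - θ z)) = Pe * (h w - h z) := by
    simp only [hφ_def] at hφwz
    linarith [hφwz]
  have hhd := h_diff G b i j w z
  rw [Matrix.mulVec_diagonal, Matrix.mulVec_diagonal, Matrix.mulVec_diagonal,
    CT_mulVec src tgt hst θ' ehat, CT_mulVec src tgt hst θ ehat, CT_mulVec src tgt hst θ e,
    hsrc_ehat, htgt_ehat, hsrc_e, htgt_e]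
  simp only [hd'_def]
  rw [if_neg (fun hcontra : ehat = e => hne hcontra.symm)]
  rw [lodf]
  have hbe : b (ehat : Sym2 V) = b s(w, z) := by rw [hehat_s]
  rw [hbe]
  have hNdiff : h w - h z = (∑ F ∈ twoForests G {i, w} {j, z}, chi b F) -
      ∑ F ∈ twoForests G {i, z} {j, w}, chi b F := by
    simp only [hh_def]
    exact hhd
  rw [hNdiff] at hkey
  rw [← hD_def]
  have hrw : Pe * (b s(w, z) *
        ((∑ F ∈ twoForests G {i, w} {j, z}, chi b F) -
          ∑ F ∈ twoForests G {i, z} {j, w}, chi b F) / D) =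
      Pe * (b s(w, z) *
        ((∑ F ∈ twoForests G {i, w} {j, z}, chi b F) -
          ∑ F ∈ twoForests G {i, z} {j, w}, chi b F)) / D := by
    ring
  rw [hrw, eq_div_iff (ne_of_gt hD)]
  linear_combination b s(w, z) * hkey
end

section
/- Every finite simple connected graph G has a unique irreducible tree partition. Moreover, this irreducible tree partition P* satisfies P* ⪰ P for every tree partition P of G (it is the greatest element, hence the unique maximal element, of the refinement order on tree partitions of G). -/
open Finset

variable {V : Type*} [Fintype V] [DecidableEq V]

/-- `P` is a partition of the vertex set `V` into nonempty, pairwise disjoint parts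
covering all of `V`. -/
def IsVertexPartition (P : Set (Set V)) : Prop :=
  (∀ p ∈ P, p.Nonempty) ∧ (∀ v : V, ∃ p ∈ P, v ∈ p) ∧
    ∀ p ∈ P, ∀ q ∈ P, p ≠ q → Disjoint p q

/-- The reduced simple graph on the parts of `P`: two distinct parts are adjacent iff
some edge of `G` joins them. -/
def reducedGraph (G : SimpleGraph V) (P : Set (Set V)) : SimpleGraph P where
  Adj a b := a ≠ b ∧ ∃ u ∈ (a : Set V), ∃ v ∈ (b : Set V), G.Adj u v
  symm := by
    constructor
    rintro a b ⟨hab, u, hu, v, hv, huv⟩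
    exact ⟨hab.symm, v, hv, u, hu, huv.symm⟩
  loopless := by
    constructor
    rintro a ⟨h, -⟩
    exact h rfl

/-- Between any two distinct parts of `P` there is at most one edge of `G`, i.e. the
reduced multigraph `G_P` has no parallel edges. -/
def NoParallelEdges (G : SimpleGraph V) (P : Set (Set V)) : Prop :=
  ∀ p ∈ P, ∀ q ∈ P, p ≠ q →
    ∀ u ∈ p, ∀ v ∈ q, ∀ u' ∈ p, ∀ v' ∈ q,
      G.Adj u v → G.Adj u' v' → u = u' ∧ v = v'

/-- `P` is a tree partition of `G`: it is a partition of the vertex set and the reduced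
multigraph `G_P` is a tree, i.e. the reduced simple graph is a tree and there are no
parallel edges between parts. -/
def IsTreePartition (G : SimpleGraph V) (P : Set (Set V)) : Prop :=
  IsVertexPartition P ∧ (reducedGraph G P).IsTree ∧ NoParallelEdges G P

/-- `P₁` is finer than `P₂` (written `P₁ ⪰ P₂`): every part of `P₁` is contained in
some part of `P₂`. -/
def Finer (P₁ P₂ : Set (Set V)) : Prop :=
  ∀ p ∈ P₁, ∃ q ∈ P₂, p ⊆ q

/-- `P` is an irreducible tree partition of `G`: a tree partition that is maximal with
respect to the refinement order, i.e. no strictly finer tree partition exists. -/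
def IsIrreducibleTreePartition (G : SimpleGraph V) (P : Set (Set V)) : Prop :=
  IsTreePartition G P ∧
    ∀ Q : Set (Set V), IsTreePartition G Q → Finer Q P → Q = P

/-!
The irreducible tree partition is the partition `P*` of `V` into the connected components of `G`
with all its bridges deleted. In a tree partition, an edge `uv` between two parts is a bridge of
`G`: a `u`–`v` walk avoiding `uv` would project to a walk in the reduced tree avoiding its only
edge between the two parts. So no edge inside a component of `P*` crosses parts, and `P*` is
finer than every tree partition. Conversely, every edge between parts of `P*` is a bridge `e` of
`G`, and each part stays connected in `G - e`, so a walk in the reduced graph avoiding the edge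
induced by `e` lifts to a walk in `G - e`. This rules out cycles and parallel edges in the reduced
graph: `P*` is a tree partition, and being the finest one it is the unique irreducible one.
-/

open SimpleGraph

theorem SimpleGraph.Reachable.lift {α β : Type*} {H : SimpleGraph α} {K : SimpleGraph β}
    (f : α → β) (hf : ∀ ⦃a b⦄, H.Adj a b → K.Reachable (f a) (f b)) {x y : α}
    (h : H.Reachable x y) : K.Reachable (f x) (f y) := by
  rw [reachable_iff_reflTransGen] at h ⊢
  exact Relation.ReflTransGen.lift' f
    (fun a b hab => (reachable_iff_reflTransGen _ _).mp (hf hab)) _ _ h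

theorem SimpleGraph.Reachable.eq_of_forall_adj {α β : Type*} {H : SimpleGraph α} {f : α → β}
    (hf : ∀ ⦃a b⦄, H.Adj a b → f a = f b) {x y : α} (h : H.Reachable x y) : f x = f y :=
  reachable_bot.mp (h.lift (K := ⊥) f fun _ _ hab => reachable_bot.mpr (hf hab))

section

omit [Fintype V] [DecidableEq V]

variable {G : SimpleGraph V} {P Q : Set (Set V)} {u v x y : V}

namespace IsVertexPartition

variable (hP : IsVertexPartition P)
include hP

theorem eq_of_mem_of_mem {p q : Set V} (hp : p ∈ P) (hq : q ∈ P) (hvp : v ∈ p)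
    (hvq : v ∈ q) : p = q := by
  by_contra hne
  exact Set.disjoint_left.mp (hP.2.2 p hp q hq hne) hvp hvq

noncomputable def part (v : V) : P := ⟨(hP.2.1 v).choose, (hP.2.1 v).choose_spec.1⟩

theorem mem_part (v : V) : v ∈ (hP.part v : Set V) := (hP.2.1 v).choose_spec.2

theorem part_eq_iff {p : P} : hP.part v = p ↔ v ∈ (p : Set V) :=
  ⟨fun h => h ▸ hP.mem_part v,
    fun h => Subtype.ext (hP.eq_of_mem_of_mem (hP.part v).2 p.2 (hP.mem_part v) h)⟩

theorem part_surjective : Function.Surjective hP.part := fun p =>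
  let ⟨v, hv⟩ := hP.1 p p.2
  ⟨v, hP.part_eq_iff.mpr hv⟩

theorem reachable_part_of_adj (h : G.Adj u v) :
    (reducedGraph G P).Reachable (hP.part u) (hP.part v) := by
  by_cases huv : hP.part u = hP.part v
  · rw [huv]
  · exact Adj.reachable ⟨huv, u, hP.mem_part u, v, hP.mem_part v, h⟩

theorem connected_reducedGraph (hG : G.Connected) : (reducedGraph G P).Connected := by
  have : Nonempty P := ⟨hP.part hG.nonempty.some⟩
  refine ⟨fun A B => ?_⟩
  obtain ⟨a, rfl⟩ := hP.part_surjective A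
  obtain ⟨b, rfl⟩ := hP.part_surjective B
  exact (hG.preconnected a b).lift hP.part fun _ _ => hP.reachable_part_of_adj

end IsVertexPartition

theorem Finer.antisymm (hP : IsVertexPartition P) (hQ : IsVertexPartition Q) (hPQ : Finer P Q)
    (hQP : Finer Q P) : P = Q := by
  suffices ∀ {P Q : Set (Set V)}, IsVertexPartition P → Finer P Q → Finer Q P → P ⊆ Q from
    (this hP hPQ hQP).antisymm (this hQ hQP hPQ)
  intro P Q hP hPQ hQP p hp
  obtain ⟨q, hq, hpq⟩ := hPQ p hp
  obtain ⟨p', hp', hqp'⟩ := hQP q hq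
  obtain ⟨v, hv⟩ := hP.1 p hp
  have hpp' : p = p' := hP.eq_of_mem_of_mem hp hp' hv (hqp' (hpq hv))
  rwa [hpq.antisymm (hpp' ▸ hqp')]

theorem NoParallelEdges.eq_of_sym2_part_eq (hP : IsVertexPartition P) (hnp : NoParallelEdges G P)
    {a b : V} (hab : G.Adj a b) (huv : G.Adj u v) (hne : hP.part u ≠ hP.part v)
    (h : s(hP.part a, hP.part b) = s(hP.part u, hP.part v)) : s(a, b) = s(u, v) := by
  have hne' : (hP.part u : Set V) ≠ hP.part v := Subtype.coe_ne_coe.mpr hne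
  rcases Sym2.eq_iff.mp h with ⟨ha, hb⟩ | ⟨ha, hb⟩
  · obtain ⟨rfl, rfl⟩ := hnp _ (hP.part u).2 _ (hP.part v).2 hne' u (hP.mem_part u) v
      (hP.mem_part v) a (ha ▸ hP.mem_part a) b (hb ▸ hP.mem_part b) huv hab
    rfl
  · obtain ⟨rfl, rfl⟩ := hnp _ (hP.part u).2 _ (hP.part v).2 hne' u (hP.mem_part u) v
      (hP.mem_part v) b (hb ▸ hP.mem_part b) a (ha ▸ hP.mem_part a) huv hab.symm
    exact Sym2.eq_swap

theorem NoParallelEdges.reachable_part_of_reachable_deleteEdges (hP : IsVertexPartition P)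
    (hnp : NoParallelEdges G P) (huv : G.Adj u v) (hne : hP.part u ≠ hP.part v)
    (h : (G.deleteEdges {s(u, v)}).Reachable x y) :
    ((reducedGraph G P).deleteEdges {s(hP.part u, hP.part v)}).Reachable
      (hP.part x) (hP.part y) := by
  refine h.lift hP.part fun a b hab => ?_
  rw [deleteEdges_adj, Set.mem_singleton_iff] at hab
  by_cases hpart : hP.part a = hP.part b
  · rw [hpart]
  · have hadj : (reducedGraph G P).Adj (hP.part a) (hP.part b) :=
      ⟨hpart, a, hP.mem_part a, b, hP.mem_part b, hab.1⟩
    refine (deleteEdges_adj.mpr ⟨hadj, ?_⟩).reachable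
    exact fun h' =>
      hab.2 (hnp.eq_of_sym2_part_eq hP hab.1 huv hne (Set.mem_singleton_iff.mp h'))

theorem IsTreePartition.isBridge (hQ : IsTreePartition G Q) (huv : G.Adj u v)
    (hne : hQ.1.part u ≠ hQ.1.part v) : G.IsBridge s(u, v) := fun h =>
  isAcyclic_iff_forall_adj_isBridge.mp hQ.2.1.isAcyclic
    ⟨hne, u, hQ.1.mem_part u, v, hQ.1.mem_part v, huv⟩
    (hQ.2.2.reachable_part_of_reachable_deleteEdges hQ.1 huv hne h)

namespace SimpleGraph

variable (G) in
def deleteBridges : SimpleGraph V := G.deleteEdges {e | G.IsBridge e}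

variable (G) in
def bridgeComponents : Set (Set V) :=
  Set.range (ConnectedComponent.supp : G.deleteBridges.ConnectedComponent → Set V)

theorem deleteBridges_adj : G.deleteBridges.Adj u v ↔ G.Adj u v ∧ ¬ G.IsBridge s(u, v) := by
  simp [deleteBridges]

theorem isBridge_of_not_reachable_deleteBridges (huv : G.Adj u v)
    (h : ¬ G.deleteBridges.Reachable u v) : G.IsBridge s(u, v) := by
  by_contra hb
  exact h (deleteBridges_adj.mpr ⟨huv, hb⟩).reachable

theorem IsBridge.deleteBridges_le {e : Sym2 V} (he : G.IsBridge e) :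
    G.deleteBridges ≤ G.deleteEdges {e} :=
  deleteEdges_anti (Set.singleton_subset_iff.mpr he)

theorem IsBridge.reachable_deleteEdges_of_adj {e : Sym2 V} {a b : V} (he : G.IsBridge e)
    (hab : G.Adj a b) (hne : s(a, b) ≠ e) (hxa : G.deleteBridges.Reachable x a)
    (hby : G.deleteBridges.Reachable b y) : (G.deleteEdges {e}).Reachable x y :=
  (hxa.mono he.deleteBridges_le).trans <|
    (deleteEdges_adj.mpr ⟨hab, hne⟩).reachable.trans (hby.mono he.deleteBridges_le)

theorem reachable_deleteBridges_iff {p : Set V} (hp : p ∈ G.bridgeComponents) (hx : x ∈ p) :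
    G.deleteBridges.Reachable x y ↔ y ∈ p := by
  obtain ⟨C, rfl⟩ := hp
  rw [ConnectedComponent.mem_supp_iff] at hx ⊢
  rw [← hx, ← ConnectedComponent.eq, eq_comm]

end SimpleGraph

variable (G) in
theorem isVertexPartition_bridgeComponents : IsVertexPartition G.bridgeComponents :=
  ⟨by rintro _ ⟨C, rfl⟩; exact C.nonempty_supp,
    fun v => ⟨_, ⟨G.deleteBridges.connectedComponentMk v, rfl⟩, rfl⟩,
    by rintro _ ⟨C, rfl⟩ _ ⟨D, rfl⟩ hCD
       exact pairwise_disjoint_supp_connectedComponent _ (fun h => hCD (congrArg _ h))⟩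

theorem noParallelEdges_bridgeComponents : NoParallelEdges G G.bridgeComponents := by
  intro p hp q hq hpq u hu v hv u' hu' v' hv' huv hu'v'
  have hvp : v ∉ p := fun hv' =>
    hpq ((isVertexPartition_bridgeComponents G).eq_of_mem_of_mem hp hq hv' hv)
  have he : G.IsBridge s(u, v) := isBridge_of_not_reachable_deleteBridges huv fun h =>
    hvp ((reachable_deleteBridges_iff hp hu).mp h)
  by_cases heq : s(u', v') = s(u, v)
  · rcases Sym2.eq_iff.mp heq with ⟨rfl, rfl⟩ | ⟨rfl, -⟩
    · exact ⟨rfl, rfl⟩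
    · exact absurd hu' hvp
  · have hround : (G.deleteEdges {s(u, v)}).Reachable u v :=
      he.reachable_deleteEdges_of_adj hu'v' heq ((reachable_deleteBridges_iff hp hu).mpr hu')
        ((reachable_deleteBridges_iff hq hv').mpr hv)
    exact absurd hround (isBridge_iff.mp he)

theorem isAcyclic_reducedGraph_bridgeComponents :
    (reducedGraph G G.bridgeComponents).IsAcyclic := by
  have hB := isVertexPartition_bridgeComponents G
  have reach {p : G.bridgeComponents} {x y : V} (hx : x ∈ (p : Set V)) (hy : y ∈ (p : Set V)) :
      G.deleteBridges.Reachable x y := (reachable_deleteBridges_iff p.2 hx).mpr hy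
  rw [isAcyclic_iff_forall_adj_isBridge]
  rintro A B ⟨hAB, u, hu, v, hv, huv⟩
  have he : G.IsBridge s(u, v) := isBridge_of_not_reachable_deleteBridges huv fun h =>
    hAB <| Subtype.ext <|
      hB.eq_of_mem_of_mem A.2 B.2 hu ((reachable_deleteBridges_iff B.2 hv).mp h.symm)
  let rep := Function.surjInv hB.part_surjective
  have hrep (C : G.bridgeComponents) : rep C ∈ (C : Set V) :=
    hB.part_eq_iff.mp (Function.surjInv_eq _ C)
  have step ⦃C D : G.bridgeComponents⦄
      (hCD : ((reducedGraph G G.bridgeComponents).deleteEdges {s(A, B)}).Adj C D) :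
      (G.deleteEdges {s(u, v)}).Reachable (rep C) (rep D) := by
    obtain ⟨⟨-, a, ha, b, hb, hab⟩, hCD⟩ := deleteEdges_adj.mp hCD
    refine he.reachable_deleteEdges_of_adj hab (fun habuv => hCD ?_) (reach (hrep C) ha)
      (reach hb (hrep D))
    have := congrArg (Sym2.map hB.part) habuv
    rwa [Sym2.map_mk, Sym2.map_mk, hB.part_eq_iff.mpr ha, hB.part_eq_iff.mpr hb,
      hB.part_eq_iff.mpr hu, hB.part_eq_iff.mpr hv] at this
  rw [isBridge_iff]
  exact fun hAB' => isBridge_iff.mp he <|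
    ((reach hu (hrep A)).mono he.deleteBridges_le).trans <|
      (hAB'.lift rep step).trans ((reach (hrep B) hv).mono he.deleteBridges_le)

theorem IsTreePartition.part_eq_of_reachable_deleteBridges (hQ : IsTreePartition G Q)
    (h : G.deleteBridges.Reachable x y) : hQ.1.part x = hQ.1.part y :=
  h.eq_of_forall_adj fun a b hab => by
    rw [deleteBridges_adj] at hab
    by_contra hne
    exact hab.2 (hQ.isBridge hab.1 hne)

theorem IsTreePartition.bridgeComponents_finer (hQ : IsTreePartition G Q) :
    Finer G.bridgeComponents Q := by
  rintro _ ⟨C, rfl⟩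
  obtain ⟨v, hv⟩ := C.nonempty_supp
  refine ⟨hQ.1.part v, (hQ.1.part v).2, fun u hu => ?_⟩
  rw [hQ.part_eq_of_reachable_deleteBridges (C.reachable_of_mem_supp hv hu)]
  exact hQ.1.mem_part u

theorem isTreePartition_bridgeComponents (hG : G.Connected) :
    IsTreePartition G G.bridgeComponents :=
  ⟨isVertexPartition_bridgeComponents G,
    ⟨(isVertexPartition_bridgeComponents G).connected_reducedGraph hG,
      isAcyclic_reducedGraph_bridgeComponents⟩,
    noParallelEdges_bridgeComponents⟩

theorem IsIrreducibleTreePartition.eq_bridgeComponents (hG : G.Connected)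
    (hP : IsIrreducibleTreePartition G P) : P = G.bridgeComponents :=
  (hP.2 _ (isTreePartition_bridgeComponents hG) hP.1.bridgeComponents_finer).symm

theorem isIrreducibleTreePartition_bridgeComponents (hG : G.Connected) :
    IsIrreducibleTreePartition G G.bridgeComponents :=
  ⟨isTreePartition_bridgeComponents hG, fun _ hQ hQB =>
    Finer.antisymm hQ.1 (isVertexPartition_bridgeComponents G) hQB hQ.bridgeComponents_finer⟩

end

/-- Every finite simple connected graph has a unique irreducible tree
partition; moreover the irreducible tree partition is finer than every tree partition
(it is the greatest element of the refinement order). -/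
theorem existsUnique_irreducible_tree_partition (G : SimpleGraph V) (hG : G.Connected) :
    (∃! P : Set (Set V), IsIrreducibleTreePartition G P) ∧
      ∀ P : Set (Set V), IsIrreducibleTreePartition G P →
        ∀ Q : Set (Set V), IsTreePartition G Q → Finer P Q := by
  refine ⟨⟨G.bridgeComponents, isIrreducibleTreePartition_bridgeComponents hG,
    fun P hP => hP.eq_bridgeComponents hG⟩, fun P hP Q hQ => ?_⟩
  rw [hP.eq_bridgeComponents hG]
  exact hQ.bridgeComponents_finer
end

section
/- Let G = (N, E) be a finite simple connected graph and let E_b ⊆ E be its set of bridges. For every tree partition P of G, the vertex set of every connected component of (N, E∖E_b) is contained in a single part of P. Hence the partition P* of N into the connected components of (N, E∖E_b) is finer than every tree partition of G. -/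
open Finset

variable {V : Type*} [Fintype V] [DecidableEq V]

/-- The graph `(N, E ∖ E_b)` obtained from `G` by deleting all of its bridges. -/
def bridgeFree (G : SimpleGraph V) : SimpleGraph V :=
  G.deleteEdges {a : Sym2 V | G.IsBridge a}

/-- The partition of the vertex set into the vertex sets of the connected components of
the graph obtained from `G` by deleting all bridges. -/
def bridgePartition (G : SimpleGraph V) : Set (Set V) :=
  {S : Set V | ∃ v : V, S = {u : V | (bridgeFree G).Reachable u v}}

/-- parts containing a common element are equal -/
lemma part_unique {Q : Set (Set V)} (hQ : IsVertexPartition Q)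
    {p q : Set V} (hp : p ∈ Q) (hq : q ∈ Q) {a : V} (hap : a ∈ p) (haq : a ∈ q) :
    p = q := by
  by_contra hne
  exact Set.disjoint_left.mp (hQ.2.2 p hp q hq hne) hap haq

/-- Projection: a walk in `G` minus the edge `uv` yields reachability in the reduced
graph minus the edge `pq`. -/
lemma project_walk (G : SimpleGraph V) (Q : Set (Set V)) (hQ : IsTreePartition G Q)
    {u v : V} {p q : Set V} (hp : p ∈ Q) (hq : q ∈ Q) (hup : u ∈ p) (hvq : v ∈ q)
    (hpq : p ≠ q) (huv : G.Adj u v) :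
    ∀ {a b : V} (_ : (G \ SimpleGraph.fromEdgeSet {s(u, v)}).Walk a b)
      (pa pb : Q) (_ : a ∈ (pa : Set V)) (_ : b ∈ (pb : Set V)),
      ((reducedGraph G Q) \ SimpleGraph.fromEdgeSet {s((⟨p, hp⟩ : Q), (⟨q, hq⟩ : Q))}).Reachable pa pb := by
  intro a b w
  induction w with
  | nil =>
    intro pa pb hpa hpb
    have : pa = pb := Subtype.ext (part_unique hQ.1 pa.2 pb.2 hpa hpb)
    rw [this]
  | @cons a x b hax w ih =>
    intro pa pb hpa hpb
    obtain ⟨px', hpx', hxpx⟩ := hQ.1.2.1 x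
    set px : Q := ⟨px', hpx'⟩
    have hreach := ih px pb hxpx hpb
    by_cases hpax : pa = px
    · rwa [hpax]
    · refine SimpleGraph.Reachable.trans (SimpleGraph.Adj.reachable ?_) hreach
      obtain ⟨haxG, haxe⟩ := hax
      simp only [SimpleGraph.fromEdgeSet_adj, Set.mem_singleton_iff, not_and] at haxe
      have hne : pa ≠ px := hpax
      have hadj : (reducedGraph G Q).Adj pa px := ⟨hne, a, hpa, x, hxpx, haxG⟩
      refine ⟨hadj, ?_⟩
      simp only [SimpleGraph.fromEdgeSet_adj, Set.mem_singleton_iff, not_and]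
      intro heq
      rw [Sym2.eq_iff] at heq
      have hnp := hQ.2.2
      rcases heq with ⟨h1, h2⟩ | ⟨h1, h2⟩
      · -- pa = p, px = q
        have hap : a ∈ p := by rw [← show (pa : Set V) = p from congrArg Subtype.val h1]; exact hpa
        have hxq : x ∈ q := by rw [← show (px : Set V) = q from congrArg Subtype.val h2]; exact hxpx
        obtain ⟨he1, he2⟩ := hnp p hp q hq hpq u hup v hvq a hap x hxq huv haxG
        exact (haxe (by rw [← he1, ← he2]) haxG.ne).elim
      · -- pa = q, px = p
        have haq : a ∈ q := by rw [← show (pa : Set V) = q from congrArg Subtype.val h1]; exact hpa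
        have hxp : x ∈ p := by rw [← show (px : Set V) = p from congrArg Subtype.val h2]; exact hxpx
        obtain ⟨he1, he2⟩ := hnp p hp q hq hpq u hup v hvq x hxp a haq huv haxG.symm
        exact (haxe (by rw [← he1, ← he2, Sym2.eq_swap]) haxG.ne).elim

/-- A non-bridge edge has both endpoints in the same part. -/
lemma step_in_part (G : SimpleGraph V) (Q : Set (Set V)) (hQ : IsTreePartition G Q)
    {u v : V} (h : (bridgeFree G).Adj u v) {p : Set V} (hp : p ∈ Q) (hup : u ∈ p) :
    v ∈ p := by
  obtain ⟨q, hq, hvq⟩ := hQ.1.2.1 v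
  by_cases hpq : p = q
  · rwa [hpq]
  · exfalso
    obtain ⟨huvG, hnb⟩ := h
    apply hnb
    rw [SimpleGraph.fromEdgeSet_adj]
    refine ⟨?_, huvG.ne⟩
    rw [Set.mem_setOf_eq, SimpleGraph.isBridge_iff]
    rintro ⟨w⟩
    -- project walk: reach from part of u to part of v in reduced \ {pq}
    have hproj := project_walk G Q hQ hp hq hup hvq hpq huvG w ⟨p, hp⟩ ⟨q, hq⟩ hup hvq
    -- but edge pq is a bridge in the reduced tree
    have htree := hQ.2.1
    have hadj : (reducedGraph G Q).Adj ⟨p, hp⟩ ⟨q, hq⟩ :=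
      ⟨fun he => hpq (congrArg Subtype.val he), u, hup, v, hvq, huvG⟩
    have hbr := (SimpleGraph.isAcyclic_iff_forall_adj_isBridge.mp htree.2) hadj
    rw [SimpleGraph.isBridge_iff] at hbr
    exact hbr hproj

/-- For every tree partition `Q` of a finite simple connected graph
`G`, the vertex set of every connected component of the graph obtained from `G` by
deleting all bridges is contained in a single part of `Q`; hence the partition into
these components is finer than every tree partition of `G`. -/
theorem bridgePartition_finer (G : SimpleGraph V) (hG : G.Connected)
    (Q : Set (Set V)) (hQ : IsTreePartition G Q) :
    (∀ v : V, ∃ q ∈ Q, {u : V | (bridgeFree G).Reachable u v} ⊆ q) ∧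
      Finer (bridgePartition G) Q := by
  have key : ∀ v : V, ∃ q ∈ Q, {u : V | (bridgeFree G).Reachable u v} ⊆ q := by
    intro v
    obtain ⟨q, hq, hvq⟩ := hQ.1.2.1 v
    refine ⟨q, hq, ?_⟩
    intro u hu
    obtain ⟨w⟩ := hu
    induction w with
    | nil => exact hvq
    | @cons a x b hax w ih =>
      exact step_in_part G Q hQ hax.symm hq (ih hvq)
  refine ⟨key, ?_⟩
  rintro S ⟨v, rfl⟩
  exact key v
end

section
/- Let G = (N, E) be a finite simple connected graph and let E_b ⊆ E be its set of bridges. Then the partition of N into the vertex sets of the connected components of (N, E∖E_b) is the unique irreducible tree partition of G (this establishes the correctness of the linear-time algorithm that computes the irreducible tree partition by deleting all bridges and taking connected components). -/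
open Finset

variable {V : Type*} [Fintype V] [DecidableEq V]

section Aux

open SimpleGraph

variable {V : Type*} [Fintype V] [DecidableEq V]

private lemma reachable_map' {β : Type*} {H : SimpleGraph V} {R : SimpleGraph β} {f : V → β}
    (h : ∀ x y, H.Adj x y → f x = f y ∨ R.Adj (f x) (f y)) {x y : V}
    (hxy : H.Reachable x y) : R.Reachable (f x) (f y) := by
  obtain ⟨W⟩ := hxy
  induction W with
  | nil => exact Reachable.refl _
  | cons ha p ih =>
    rcases h _ _ ha with he | hadj
    · rw [he]; exact ih
    · exact hadj.reachable.trans ih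

private lemma reachable_const' {β : Type*} {H : SimpleGraph V} {f : V → β}
    (h : ∀ x y, H.Adj x y → f x = f y) {x y : V} (hxy : H.Reachable x y) : f x = f y := by
  obtain ⟨W⟩ := hxy
  induction W with
  | nil => rfl
  | cons ha p ih => exact (h _ _ ha).trans ih

private lemma reachable_lift' {β : Type*} {R : SimpleGraph β} {H : SimpleGraph V} {g : β → V}
    (h : ∀ a b, R.Adj a b → H.Reachable (g a) (g b)) {a b : β} (hab : R.Reachable a b) :
    H.Reachable (g a) (g b) := by
  obtain ⟨W⟩ := hab
  induction W with
  | nil => exact Reachable.refl _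
  | cons ha p ih => exact (h _ _ ha).trans ih

private lemma part_unique_s4 {P : Set (Set V)} (hP : IsVertexPartition P) {p q : Set V} {x : V}
    (hp : p ∈ P) (hq : q ∈ P) (hx : x ∈ p) (hx' : x ∈ q) : p = q := by
  by_contra h
  exact Set.disjoint_left.mp (hP.2.2 p hp q hq h) hx hx'

private lemma comp_eq {G : SimpleGraph V} {x w : V} (hx : (bridgeFree G).Reachable x w) :
    {u : V | (bridgeFree G).Reachable u w} = {u : V | (bridgeFree G).Reachable u x} :=
  Set.ext fun u => ⟨fun h => h.trans hx.symm, fun h => h.trans hx⟩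

private lemma isBridge_of_not_reachable {G : SimpleGraph V} {u v : V} (h : G.Adj u v)
    (hr : ¬ (bridgeFree G).Reachable u v) : G.IsBridge s(u, v) := by
  by_contra hb
  exact hr (SimpleGraph.Adj.reachable
    (show (bridgeFree G).Adj u v by
      simp only [bridgeFree, SimpleGraph.deleteEdges_adj, Set.mem_setOf_eq]
      exact ⟨h, hb⟩))

private lemma bridgeFree_le_del {G : SimpleGraph V} {u v : V} (hb : G.IsBridge s(u, v)) :
    bridgeFree G ≤ G.deleteEdges {s(u, v)} := by
  intro x y hxy
  simp only [bridgeFree, SimpleGraph.deleteEdges_adj, Set.mem_setOf_eq] at hxy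
  rw [SimpleGraph.deleteEdges_adj, Set.mem_singleton_iff]
  exact ⟨hxy.1, fun he => hxy.2 (he ▸ hb)⟩

/-- In any tree partition, the endpoints of a non-bridge edge lie in the same part. -/
private lemma same_part_of_not_bridge {G : SimpleGraph V} {P : Set (Set V)}
    (hT : IsTreePartition G P) {u v : V} (huv : G.Adj u v) {p q : Set V}
    (hp : p ∈ P) (hq : q ∈ P) (hu : u ∈ p) (hv : v ∈ q) (hb : ¬ G.IsBridge s(u, v)) :
    p = q := by
  by_contra hne
  obtain ⟨hPart, hTree, hNP⟩ := hT
  set pp : P := ⟨p, hp⟩ with hpp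
  set qq : P := ⟨q, hq⟩ with hqq
  have hadj : (reducedGraph G P).Adj pp qq :=
    ⟨fun h => hne (congrArg Subtype.val h), u, hu, v, hv, huv⟩
  have hbr : (reducedGraph G P).IsBridge s(pp, qq) :=
    (SimpleGraph.isAcyclic_iff_forall_adj_isBridge.mp hTree.IsAcyclic) hadj
  rw [SimpleGraph.isBridge_iff] at hb hbr
  push_neg at hb
  have hreach : ((G.deleteEdges {s(u, v)})).Reachable u v := hb
  choose f hfP hfmem using hPart.2.1
  have step : ∀ x y, (G.deleteEdges {s(u, v)}).Adj x y →
      (⟨f x, hfP x⟩ : P) = ⟨f y, hfP y⟩ ∨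
        ((reducedGraph G P).deleteEdges {s(pp, qq)}).Adj ⟨f x, hfP x⟩ ⟨f y, hfP y⟩ := by
    intro x y hxy
    rw [SimpleGraph.deleteEdges_adj, Set.mem_singleton_iff] at hxy
    obtain ⟨hGxy, hsne⟩ := hxy
    by_cases hfe : f x = f y
    · exact Or.inl (Subtype.ext hfe)
    · right
      rw [SimpleGraph.deleteEdges_adj, Set.mem_singleton_iff]
      refine ⟨⟨fun h => hfe (congrArg Subtype.val h), x, hfmem x, y, hfmem y, hGxy⟩, ?_⟩
      intro hEq
      rw [Sym2.eq_iff] at hEq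
      rcases hEq with ⟨h1, h2⟩ | ⟨h1, h2⟩
      · have hx : x ∈ p := by
          have hfx : f x = p := congrArg Subtype.val h1
          exact hfx ▸ hfmem x
        have hy : y ∈ q := by
          have hfy : f y = q := congrArg Subtype.val h2
          exact hfy ▸ hfmem y
        obtain ⟨h3, h4⟩ := hNP p hp q hq hne u hu v hv x hx y hy huv hGxy
        exact hsne (by rw [h3, h4])
      · have hx : x ∈ q := by
          have hfx : f x = q := congrArg Subtype.val h1
          exact hfx ▸ hfmem x
        have hy : y ∈ p := by
          have hfy : f y = p := congrArg Subtype.val h2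
          exact hfy ▸ hfmem y
        obtain ⟨h3, h4⟩ := hNP p hp q hq hne u hu v hv y hy x hx huv hGxy.symm
        exact hsne (by rw [← h3, ← h4]; exact Sym2.eq_swap)
  have hR : ((reducedGraph G P).deleteEdges {s(pp, qq)}).Reachable
      ⟨f u, hfP u⟩ ⟨f v, hfP v⟩ := reachable_map' step hreach
  have hFu : (⟨f u, hfP u⟩ : P) = pp :=
    Subtype.ext (part_unique_s4 hPart (hfP u) hp (hfmem u) hu)
  have hFv : (⟨f v, hfP v⟩ : P) = qq :=
    Subtype.ext (part_unique_s4 hPart (hfP v) hq (hfmem v) hv)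
  rw [hFu, hFv] at hR
  exact hbr hR

/-- The bridge partition refines every tree partition. -/
private lemma bridgePartition_finer_s4 {G : SimpleGraph V} {P : Set (Set V)}
    (hT : IsTreePartition G P) : Finer (bridgePartition G) P := by
  rintro p ⟨v, rfl⟩
  obtain ⟨q, hq, hv⟩ := hT.1.2.1 v
  refine ⟨q, hq, ?_⟩
  intro u hu
  choose f hfP hfmem using hT.1.2.1
  have step : ∀ x y, (bridgeFree G).Adj x y → f x = f y := by
    intro x y hxy
    have h1 : G.Adj x y ∧ ¬ G.IsBridge s(x, y) := by
      simpa only [bridgeFree, SimpleGraph.deleteEdges_adj, Set.mem_setOf_eq] using hxy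
    exact same_part_of_not_bridge hT h1.1 (hfP x) (hfP y) (hfmem x) (hfmem y) h1.2
  have hfe : f u = f v := reachable_const' step hu
  have hfv : f v = q := part_unique_s4 hT.1 (hfP v) hq (hfmem v) hv
  rw [← hfv, ← hfe]
  exact hfmem u

private lemma finer_antisymm {P Q : Set (Set V)} (hP : IsVertexPartition P)
    (hQ : IsVertexPartition Q) (h1 : Finer P Q) (h2 : Finer Q P) : P = Q := by
  have key : ∀ P' Q' : Set (Set V), IsVertexPartition P' → Finer P' Q' → Finer Q' P' →
      P' ⊆ Q' := by
    intro P' Q' hP' h1' h2' p hp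
    obtain ⟨q, hq, hpq⟩ := h1' p hp
    obtain ⟨p', hp', hqp'⟩ := h2' q hq
    obtain ⟨x, hx⟩ := hP'.1 p hp
    have hpp' : p = p' := part_unique_s4 hP' hp hp' hx (hqp' (hpq hx))
    have : p = q := Set.Subset.antisymm hpq (hpp' ▸ hqp')
    exact this ▸ hq
  exact Set.Subset.antisymm (key P Q hP h1 h2) (key Q P hQ h2 h1)

end Aux

section Main

open SimpleGraph

variable {V : Type*} [Fintype V] [DecidableEq V]

private lemma bp_isVertexPartition (G : SimpleGraph V) :
    IsVertexPartition (bridgePartition G) := by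
  refine ⟨?_, ?_, ?_⟩
  · rintro p ⟨v, rfl⟩
    exact ⟨v, SimpleGraph.Reachable.refl v⟩
  · intro v
    exact ⟨_, ⟨v, rfl⟩, SimpleGraph.Reachable.refl v⟩
  · rintro p ⟨v, rfl⟩ q ⟨w, rfl⟩ hne
    rw [Set.disjoint_left]
    intro x hx hx'
    exact hne ((comp_eq hx).trans (comp_eq hx').symm)

/-- The canonical part map for the bridge partition. -/
private def Fbp (G : SimpleGraph V) (x : V) : (↥(bridgePartition G)) :=
  ⟨{u : V | (bridgeFree G).Reachable u x}, ⟨x, rfl⟩⟩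

private lemma Fbp_eq {G : SimpleGraph V} {a : (↥(bridgePartition G))} {x : V}
    (hx : x ∈ (a : Set V)) : Fbp G x = a := by
  obtain ⟨v, hv⟩ := a.2
  refine Subtype.ext ?_
  have hx' : x ∈ {u : V | (bridgeFree G).Reachable u v} := hv ▸ hx
  rw [Fbp]
  exact ((comp_eq hx').symm).trans hv.symm

private lemma bp_reduced_connected {G : SimpleGraph V} (hG : G.Connected) :
    (reducedGraph G (bridgePartition G)).Connected := by
  have hne : Nonempty V := hG.nonempty
  obtain ⟨v0⟩ := hne
  haveI : Nonempty (↥(bridgePartition G)) := ⟨Fbp G v0⟩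
  refine ⟨?_⟩
  intro a b
  obtain ⟨va, hva⟩ := a.2
  obtain ⟨vb, hvb⟩ := b.2
  have step : ∀ x y, G.Adj x y →
      Fbp G x = Fbp G y ∨ (reducedGraph G (bridgePartition G)).Adj (Fbp G x) (Fbp G y) := by
    intro x y hxy
    by_cases hc : ({u : V | (bridgeFree G).Reachable u x} : Set V)
        = {u : V | (bridgeFree G).Reachable u y}
    · exact Or.inl (Subtype.ext hc)
    · exact Or.inr ⟨fun h => hc (congrArg Subtype.val h),
        x, SimpleGraph.Reachable.refl x, y, SimpleGraph.Reachable.refl y, hxy⟩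
  have := reachable_map' step (hG.preconnected va vb)
  have ha : Fbp G va = a := Fbp_eq (show va ∈ (a : Set V) from hva ▸ SimpleGraph.Reachable.refl va)
  have hb : Fbp G vb = b := Fbp_eq (show vb ∈ (b : Set V) from hvb ▸ SimpleGraph.Reachable.refl vb)
  rwa [ha, hb] at this

private lemma bp_reduced_acyclic (G : SimpleGraph V) :
    (reducedGraph G (bridgePartition G)).IsAcyclic := by
  rw [SimpleGraph.isAcyclic_iff_forall_adj_isBridge]
  intro a b hadj
  obtain ⟨hab, u, hu, v, hv, huv⟩ := hadj
  have hFu : Fbp G u = a := Fbp_eq hu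
  have hFv : Fbp G v = b := Fbp_eq hv
  have hnr : ¬ (bridgeFree G).Reachable u v := by
    intro hr
    have : Fbp G u = Fbp G v := Subtype.ext (comp_eq (hr : u ∈ {w | (bridgeFree G).Reachable w v})).symm
    exact hab (hFu ▸ hFv ▸ this)
  have hbridge : G.IsBridge s(u, v) := isBridge_of_not_reachable huv hnr
  rw [SimpleGraph.isBridge_iff]
  intro hreach
  have hreach' : ((reducedGraph G (bridgePartition G)).deleteEdges {s(a, b)}).Reachable a b :=
    hreach
  set g : (↥(bridgePartition G)) → V := fun c => c.2.choose with hg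
  have hgspec : ∀ c : (↥(bridgePartition G)),
      (c : Set V) = {w : V | (bridgeFree G).Reachable w (g c)} := fun c => c.2.choose_spec
  have hmem_reach : ∀ (c : (↥(bridgePartition G))) (x : V), x ∈ (c : Set V) →
      (bridgeFree G).Reachable x (g c) := by
    intro c x hx
    rw [hgspec c] at hx
    exact hx
  have hstep : ∀ c d, ((reducedGraph G (bridgePartition G)).deleteEdges {s(a, b)}).Adj c d →
      (G.deleteEdges {s(u, v)}).Reachable (g c) (g d) := by
    intro c d hcd
    rw [SimpleGraph.deleteEdges_adj, Set.mem_singleton_iff] at hcd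
    obtain ⟨⟨hcdne, x, hx, y, hy, hxy⟩, hsne⟩ := hcd
    have hxy' : (G.deleteEdges {s(u, v)}).Adj x y := by
      rw [SimpleGraph.deleteEdges_adj, Set.mem_singleton_iff]
      refine ⟨hxy, ?_⟩
      intro hEq
      rw [Sym2.eq_iff] at hEq
      rcases hEq with ⟨rfl, rfl⟩ | ⟨rfl, rfl⟩
      · exact hsne (by rw [Fbp_eq hx] at hFu; rw [Fbp_eq hy] at hFv; rw [hFu, hFv])
      · refine hsne ?_
        rw [Fbp_eq hx] at hFv; rw [Fbp_eq hy] at hFu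
        rw [← hFu, ← hFv]
        exact Sym2.eq_swap
    have h1 : (G.deleteEdges {s(u, v)}).Reachable (g c) x :=
      ((hmem_reach c x hx).symm.mono (bridgeFree_le_del hbridge))
    have h2 : (G.deleteEdges {s(u, v)}).Reachable y (g d) :=
      ((hmem_reach d y hy).mono (bridgeFree_le_del hbridge))
    exact (h1.trans hxy'.reachable).trans h2
  have hlift : (G.deleteEdges {s(u, v)}).Reachable (g a) (g b) :=
    reachable_lift' hstep hreach'
  have h1 : (G.deleteEdges {s(u, v)}).Reachable u (g a) :=
    (hmem_reach a u hu).mono (bridgeFree_le_del hbridge)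
  have h2 : (G.deleteEdges {s(u, v)}).Reachable (g b) v :=
    ((hmem_reach b v hv).symm.mono (bridgeFree_le_del hbridge))
  have : (G.deleteEdges {s(u, v)}).Reachable u v := (h1.trans hlift).trans h2
  rw [SimpleGraph.isBridge_iff] at hbridge
  exact hbridge this

private lemma bp_noParallel (G : SimpleGraph V) :
    NoParallelEdges G (bridgePartition G) := by
  rintro p hp q hq hne u hu v hv u' hu' v' hv' huv hu'v'
  obtain ⟨vp, rfl⟩ := hp
  obtain ⟨vq, rfl⟩ := hq
  have hnr : ¬ (bridgeFree G).Reachable u v := by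
    intro hr
    exact hne (((comp_eq hu).trans (comp_eq (hr.trans hv)).symm))
  have hbridge : G.IsBridge s(u, v) := isBridge_of_not_reachable huv hnr
  by_contra hcon
  have hsne : s(u', v') ≠ s(u, v) := by
    intro hEq
    rw [Sym2.eq_iff] at hEq
    rcases hEq with ⟨h1, h2⟩ | ⟨h1, h2⟩
    · exact hcon ⟨h1.symm, h2.symm⟩
    · subst h1; subst h2
      exact hne ((comp_eq hu').trans (comp_eq hv).symm)
  have hadj' : (G.deleteEdges {s(u, v)}).Adj u' v' := by
    rw [SimpleGraph.deleteEdges_adj, Set.mem_singleton_iff]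
    exact ⟨hu'v', hsne⟩
  have h1 : (G.deleteEdges {s(u, v)}).Reachable u u' :=
    ((hu.trans hu'.symm : (bridgeFree G).Reachable u u').mono (bridgeFree_le_del hbridge))
  have h2 : (G.deleteEdges {s(u, v)}).Reachable v' v :=
    ((hv'.trans hv.symm : (bridgeFree G).Reachable v' v).mono (bridgeFree_le_del hbridge))
  have : (G.deleteEdges {s(u, v)}).Reachable u v := (h1.trans hadj'.reachable).trans h2
  rw [SimpleGraph.isBridge_iff] at hbridge
  exact hbridge this

private lemma bp_isTreePartition {G : SimpleGraph V} (hG : G.Connected) :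
    IsTreePartition G (bridgePartition G) :=
  ⟨bp_isVertexPartition G, ⟨bp_reduced_connected hG, bp_reduced_acyclic G⟩, bp_noParallel G⟩

end Main

/-- For a finite simple connected graph `G`, the partition of the
vertex set into the connected components of the graph obtained by deleting all bridges
is the unique irreducible tree partition of `G`. -/
theorem bridgePartition_eq_irreducible (G : SimpleGraph V) (hG : G.Connected) :
    IsIrreducibleTreePartition G (bridgePartition G) ∧
      ∀ P : Set (Set V), IsIrreducibleTreePartition G P → P = bridgePartition G := by
  have hbp := bp_isTreePartition hG
  constructor
  · refine ⟨hbp, ?_⟩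
    intro Q hQ hfin
    exact finer_antisymm hQ.1 hbp.1 hfin (bridgePartition_finer_s4 hQ)
  · intro P hP
    exact (hP.2 (bridgePartition G) hbp (bridgePartition_finer_s4 hP.1)).symm
end

section
/- Let G = (N, E) be a finite simple connected graph and let e = (i,j) and ê = (w,z) be two distinct edges of G such that no cycle of G contains both e and ê (this holds in particular whenever e and ê belong to two different cells of the block decomposition of a tree-partition region). Then T({i,w}, {j,z}) = ∅ and T({i,z}, {j,w}) = ∅; consequently the line outage distribution factor K_{eê} equals 0 for every choice of positive susceptances for which it is defined. -/
open Finset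

variable {V : Type*} [Fintype V] [DecidableEq V]

lemma helper_empty (G : SimpleGraph V)
    (i j w z : V) (hij : G.Adj i j) (hwz : G.Adj w z) (hne : s(i, j) ≠ s(w, z))
    (hnc : ∀ (v : V) (c : G.Walk v v), c.IsCycle →
      ¬(s(i, j) ∈ c.edges ∧ s(w, z) ∈ c.edges)) :
    twoForests G {i, w} {j, z} = ∅ := by
  rw [Finset.eq_empty_iff_forall_notMem]
  intro F hF
  simp only [twoForests, Finset.mem_filter] at hF
  obtain ⟨-, hsub, hac, u, v, huv, hcov, h1, h2⟩ := hF
  set H := SimpleGraph.fromEdgeSet (↑F : Set (Sym2 V)) with hH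
  have hle : H ≤ G := by
    rw [hH, ← G.fromEdgeSet_edgeSet]
    exact SimpleGraph.fromEdgeSet_mono hsub
  have hiu : H.Reachable i u := h1 i (by simp)
  have hwu : H.Reachable w u := h1 w (by simp)
  have hjv : H.Reachable j v := h2 j (by simp)
  have hzv : H.Reachable z v := h2 z (by simp)
  obtain ⟨p0⟩ := hiu.trans hwu.symm
  obtain ⟨q0⟩ := hzv.trans hjv.symm
  set p : H.Walk i w := p0.toPath.val with hp
  set q : H.Walk z j := q0.toPath.val with hq
  have hpP : p.IsPath := p0.toPath.2
  have hqP : q.IsPath := q0.toPath.2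
  -- every vertex on p is reachable to u; on q reachable to v
  have hpu : ∀ x ∈ p.support, H.Reachable x u := fun x hx =>
    (SimpleGraph.Reachable.symm ⟨p.takeUntil x hx⟩).trans hiu
  have hqv : ∀ x ∈ q.support, H.Reachable x v := fun x hx =>
    (SimpleGraph.Reachable.symm ⟨q.takeUntil x hx⟩).trans hzv
  have hdisj : ∀ x, x ∈ p.support → x ∈ q.support → False := fun x hxp hxq =>
    huv (((hpu x hxp).symm.trans (hqv x hxq)))
  -- transfer to G
  have hpe : ∀ e ∈ p.edges, e ∈ G.edgeSet := fun e he =>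
    SimpleGraph.edgeSet_mono hle (p.edges_subset_edgeSet he)
  have hqe : ∀ e ∈ q.edges, e ∈ G.edgeSet := fun e he =>
    SimpleGraph.edgeSet_mono hle (q.edges_subset_edgeSet he)
  set pg : G.Walk i w := p.transfer G hpe with hpg
  set qg : G.Walk z j := q.transfer G hqe with hqg
  have hpgs : pg.support = p.support := SimpleGraph.Walk.support_transfer _ _
  have hqgs : qg.support = q.support := SimpleGraph.Walk.support_transfer _ _
  have hpgP : pg.IsPath := hpP.transfer _
  have hqgP : qg.IsPath := hqP.transfer _
  set W : G.Walk j i := qg.reverse.append (SimpleGraph.Walk.cons hwz.symm pg.reverse)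
    with hW
  have hWsupp : W.support = q.support.reverse ++ p.support.reverse := by
    rw [hW, SimpleGraph.Walk.support_append]
    simp [hpgs, hqgs]
  have hWP : W.IsPath := by
    rw [SimpleGraph.Walk.isPath_def, hWsupp]
    rw [List.nodup_append]
    refine ⟨by simpa using hqP.support_nodup, by simpa using hpP.support_nodup, ?_⟩
    intro x hxq y hyp hxy
    subst hxy
    exact hdisj x (by simpa using hyp) (by simpa using hxq)
  have hWe : W.edges = q.edges.reverse ++ (s(z, w) :: p.edges.reverse) := by
    rw [hW, SimpleGraph.Walk.edges_append]
    simp [hpg, hqg, SimpleGraph.Walk.edges_transfer]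
  have hijW : s(i, j) ∉ W.edges := by
    rw [hWe]
    intro hmem
    rcases List.mem_append.1 hmem with hq' | hq'
    · have : i ∈ q.support :=
        q.fst_mem_support_of_mem_edges (List.mem_reverse.1 hq')
      exact hdisj i (p.start_mem_support) this
    · rcases List.mem_cons.1 hq' with heq | hp'
      · exact hne (heq.trans (Sym2.eq_swap))
      · have : j ∈ p.support :=
          p.snd_mem_support_of_mem_edges (List.mem_reverse.1 hp')
        exact hdisj j this (q.end_mem_support)
  have hcyc : (SimpleGraph.Walk.cons hij W).IsCycle :=
    SimpleGraph.Path.cons_isCycle ⟨W, hWP⟩ hij hijW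
  refine hnc i _ hcyc ⟨by simp, ?_⟩
  rw [SimpleGraph.Walk.edges_cons, hWe]
  simp [Sym2.eq_swap]


/-- If `e = (i, j)` and `ê = (w, z)` are distinct edges of a finite
simple connected graph `G` such that no cycle of `G` contains both, then
`T({i,w},{j,z}) = ∅` and `T({i,z},{j,w}) = ∅`; consequently `K_{e ê} = 0` for every
choice of positive susceptances. -/
theorem twoForests_empty_of_no_common_cycle (G : SimpleGraph V) (hG : G.Connected)
    (i j w z : V) (hij : G.Adj i j) (hwz : G.Adj w z) (hne : s(i, j) ≠ s(w, z))
    (hnc : ∀ (v : V) (c : G.Walk v v), c.IsCycle →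
      ¬(s(i, j) ∈ c.edges ∧ s(w, z) ∈ c.edges)) :
    twoForests G {i, w} {j, z} = ∅ ∧ twoForests G {i, z} {j, w} = ∅ ∧
      ∀ B : Sym2 V → ℝ, (∀ a ∈ G.edgeSet, 0 < B a) → lodf G B i j w z = 0 := by
  have h₁ : twoForests G {i, w} {j, z} = ∅ := helper_empty G i j w z hij hwz hne hnc
  have h₂ : twoForests G {i, z} {j, w} = ∅ := by
    refine helper_empty G i j z w hij hwz.symm ?_ ?_
    · simpa [Sym2.eq_swap] using hne
    · intro v c hc
      simpa [Sym2.eq_swap] using hnc v c hc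
  exact ⟨h₁, h₂, fun B _ => by simp [lodf, h₁, h₂]⟩
end

section
/- Let G = (N, E) be a finite simple connected graph with bridge set E_b, and let the regions of its irreducible tree partition be the vertex sets of the connected components of (N, E∖E_b). Let e = (i,j) be a non-bridge edge, lying within region N_r, and let ê = (w,z) ≠ e be any edge that is not within N_r (i.e., ê is a bridge or ê lies within a different region). Then K_{eê} = 0 for every choice of positive susceptances, i.e., Σ_{F ∈ T({i,w},{j,z})} χ(F) = Σ_{F ∈ T({i,z},{j,w})} χ(F). -/
open Finset

variable {V : Type*} [Fintype V] [DecidableEq V]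

open SimpleGraph in
lemma twoForests_empty_aux (G : SimpleGraph V)
    (i j w z : V) (hij : G.Adj i j) (hwz : G.Adj w z) (hne : s(i, j) ≠ s(w, z))
    (Nr : Set V) (hNr : Nr ∈ bridgePartition G) (hi : i ∈ Nr)
    (hout : ¬(w ∈ Nr ∧ z ∈ Nr)) :
    twoForests G ({i, w} : Set V) ({j, z} : Set V) = ∅ := by
  classical
  rw [Finset.eq_empty_iff_forall_notMem]
  intro F hF
  have hF' : IsTwoTreeForest G ({i, w} : Set V) ({j, z} : Set V) F := by
    simpa [twoForests, Finset.mem_filter] using hF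
  obtain ⟨hFE, hacyc, u, v, huv, hall, h1, h2⟩ := hF'
  set H := SimpleGraph.fromEdgeSet (↑F : Set (Sym2 V)) with hH
  have hiu : H.Reachable i u := h1 i (by simp)
  have hwu : H.Reachable w u := h1 w (by simp)
  have hjv : H.Reachable j v := h2 j (by simp)
  have hzv : H.Reachable z v := h2 z (by simp)
  obtain ⟨p1'⟩ : H.Reachable i w := hiu.trans hwu.symm
  obtain ⟨p2'⟩ : H.Reachable z j := hzv.trans hjv.symm
  set q1 : H.Walk i w := p1'.toPath.1 with hq1def
  set q2 : H.Walk z j := p2'.toPath.1 with hq2def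
  have hq1 : q1.IsPath := p1'.toPath.2
  have hq2 : q2.IsPath := p2'.toPath.2
  -- side membership for supports
  have hside1 : ∀ x ∈ q1.support, H.Reachable x u := fun x hx =>
    (Reachable.symm ⟨q1.takeUntil x hx⟩).trans hiu
  have hside2 : ∀ x ∈ q2.support, H.Reachable x v := fun x hx =>
    (Reachable.symm ⟨q2.takeUntil x hx⟩).trans hzv
  have disj : ∀ x, x ∈ q1.support → x ∈ q2.support → False := fun x hx1 hx2 =>
    huv ((hside1 x hx1).symm.trans (hside2 x hx2))
  -- edges of the paths lie in F
  have hq1F : ∀ a ∈ q1.edges, a ∈ (↑F : Set (Sym2 V)) := fun a ha => by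
    have h := q1.edges_subset_edgeSet ha
    rw [hH, SimpleGraph.edgeSet_fromEdgeSet] at h
    exact h.1
  have hq2F : ∀ a ∈ q2.edges, a ∈ (↑F : Set (Sym2 V)) := fun a ha => by
    have h := q2.edges_subset_edgeSet ha
    rw [hH, SimpleGraph.edgeSet_fromEdgeSet] at h
    exact h.1
  -- e and ê are not in F
  have heF : s(i, j) ∉ (↑F : Set (Sym2 V)) := by
    intro hmem
    have hadj : H.Adj i j := by
      rw [hH, SimpleGraph.fromEdgeSet_adj]; exact ⟨hmem, hij.ne⟩
    exact huv (hiu.symm.trans (hadj.reachable.trans hjv))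
  have heF' : s(w, z) ∉ (↑F : Set (Sym2 V)) := by
    intro hmem
    have hadj : H.Adj w z := by
      rw [hH, SimpleGraph.fromEdgeSet_adj]; exact ⟨hmem, hwz.ne⟩
    exact huv (hwu.symm.trans (hadj.reachable.trans hzv))
  -- transfer the paths to G
  have hsub1 : ∀ a ∈ q1.edges, a ∈ G.edgeSet := fun a ha => hFE (hq1F a ha)
  have hsub2 : ∀ a ∈ q2.edges, a ∈ G.edgeSet := fun a ha => hFE (hq2F a ha)
  set Q1 : G.Walk i w := q1.transfer G hsub1 with hQ1def
  set Q2 : G.Walk z j := q2.transfer G hsub2 with hQ2def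
  have hQ1 : Q1.IsPath := hq1.transfer hsub1
  have hQ2 : Q2.IsPath := hq2.transfer hsub2
  have hQ1e : Q1.edges = q1.edges := q1.edges_transfer hsub1
  have hQ2e : Q2.edges = q2.edges := q2.edges_transfer hsub2
  have hQ1s : Q1.support = q1.support := q1.support_transfer hsub1
  have hQ2s : Q2.support = q2.support := q2.support_transfer hsub2
  -- the cycle
  set c : G.Walk i i :=
    Q1.append (Walk.cons hwz (Q2.append (Walk.cons hij.symm Walk.nil))) with hcdef
  have hce : c.edges = Q1.edges ++ (s(w, z) :: (Q2.edges ++ [s(j, i)])) := by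
    simp [hcdef, Walk.edges_append, Walk.edges_cons]
  have hcs : c.support = Q1.support ++ (Q2.support ++ [i]) := by
    simp [hcdef, Walk.support_append, Walk.support_cons]
  have hwzmem : s(w, z) ∈ c.edges := by rw [hce]; simp
  have hQ1Q2 : ∀ a, a ∈ Q1.edges → a ∈ Q2.edges → False := by
    intro a
    induction a using Sym2.ind with
    | _ x y =>
      intro h1' h2'
      exact disj x (hQ1s ▸ Walk.fst_mem_support_of_mem_edges Q1 h1')
        (hQ2s ▸ Walk.fst_mem_support_of_mem_edges Q2 h2')
  have hiQ2 : i ∉ Q2.support := fun hmem =>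
    disj i (q1.start_mem_support) (hQ2s ▸ hmem)
  have hcyc : c.IsCycle := by
    refine ⟨⟨⟨?_⟩, ?_⟩, ?_⟩
    · -- edges nodup
      rw [hce]
      rw [List.nodup_append]
      refine ⟨hQ1.isTrail.edges_nodup, ?_, ?_⟩
      · rw [List.nodup_cons]
        constructor
        · intro hmem
          rcases List.mem_append.mp hmem with h | h
          · exact heF' (hq2F _ (hQ2e ▸ h))
          · rw [List.mem_singleton] at h
            exact hne (Sym2.eq_swap.trans h.symm)
        · rw [List.nodup_append]
          refine ⟨hQ2.isTrail.edges_nodup, List.nodup_singleton _, ?_⟩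
          rintro a ha _ hb rfl
          rw [List.mem_singleton] at hb
          subst hb
          exact heF (by rw [Sym2.eq_swap]; exact hq2F _ (hQ2e ▸ ha))
      · rintro a ha _ hb rfl
        rcases List.mem_cons.mp hb with h | h
        · subst h; exact heF' (hq1F _ (hQ1e ▸ ha))
        · rcases List.mem_append.mp h with h' | h'
          · exact hQ1Q2 a ha h'
          · rw [List.mem_singleton] at h'
            subst h'
            exact heF (by rw [Sym2.eq_swap]; exact hq1F _ (hQ1e ▸ ha))
    · -- c ≠ nil
      intro hnil
      rw [hnil] at hwzmem
      simp at hwzmem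
    · -- support tail nodup
      have hQ1cons : Q1.support = i :: Q1.support.tail := Q1.support_eq_cons
      have htail : c.support.tail = Q1.support.tail ++ (Q2.support ++ [i]) := by
        rw [hcs, hQ1cons]; rfl
      rw [htail, List.nodup_append]
      have hQ1nd : (i :: Q1.support.tail).Nodup := hQ1cons ▸ hQ1.support_nodup
      refine ⟨(List.nodup_cons.mp hQ1nd).2, ?_, ?_⟩
      · rw [List.nodup_append]
        refine ⟨hQ2.support_nodup, List.nodup_singleton _, ?_⟩
        rintro a ha _ hb rfl
        rw [List.mem_singleton] at hb
        subst hb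
        exact hiQ2 ha
      · rintro a ha _ hb rfl
        rcases List.mem_append.mp hb with h | h
        · exact disj a (hQ1s ▸ List.mem_of_mem_tail ha) (hQ2s ▸ h)
        · rw [List.mem_singleton] at h
          subst h
          exact (List.nodup_cons.mp hQ1nd).1 ha
  -- every edge of the cycle is a non-bridge
  have hnb : ∀ a ∈ c.edges, ¬ G.IsBridge a := fun a ha hbr =>
    (SimpleGraph.isBridge_iff_forall_cycle_notMem (c.edges_subset_edgeSet ha)).mp hbr c hcyc ha
  have hcsub : ∀ a ∈ c.edges, a ∈ (bridgeFree G).edgeSet := fun a ha => by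
    rw [bridgeFree, SimpleGraph.edgeSet_deleteEdges]
    exact ⟨c.edges_subset_edgeSet ha, hnb a ha⟩
  set c' : (bridgeFree G).Walk i i := c.transfer (bridgeFree G) hcsub with hc'def
  have hc's : c'.support = c.support := c.support_transfer hcsub
  have hwmem : w ∈ c'.support := by
    rw [hc's, hcs]
    exact List.mem_append.mpr (Or.inl Q1.end_mem_support)
  have hzmem : z ∈ c'.support := by
    rw [hc's, hcs]
    exact List.mem_append.mpr (Or.inr (List.mem_append.mpr
      (Or.inl Q2.start_mem_support)))
  have hrw : (bridgeFree G).Reachable i w := ⟨c'.takeUntil w hwmem⟩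
  have hrz : (bridgeFree G).Reachable i z := ⟨c'.takeUntil z hzmem⟩
  obtain ⟨v₀, rfl⟩ := hNr
  have hi' : (bridgeFree G).Reachable i v₀ := hi
  exact hout ⟨hrw.symm.trans hi', hrz.symm.trans hi'⟩

/-- Let `e = (i, j)` be a non-bridge edge of a finite simple connected
graph `G`, lying within a region `Nr` of the irreducible tree partition (a connected
component of the graph obtained by deleting all the bridges), and let `ê = (w, z) ≠ e`
be an edge that is not within `Nr`. Then for every choice of positive susceptances,
`Σ_{F ∈ T({i,w},{j,z})} χ(F) = Σ_{F ∈ T({i,z},{j,w})} χ(F)`, i.e. `K_{e ê} = 0`. -/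
theorem lodf_eq_zero_of_not_in_region (G : SimpleGraph V) (hG : G.Connected)
    (i j w z : V) (hij : G.Adj i j) (hwz : G.Adj w z) (hne : s(i, j) ≠ s(w, z))
    (hnb : ¬G.IsBridge s(i, j))
    (Nr : Set V) (hNr : Nr ∈ bridgePartition G) (hi : i ∈ Nr) (hj : j ∈ Nr)
    (hout : ¬(w ∈ Nr ∧ z ∈ Nr)) :
    (∀ B : Sym2 V → ℝ, (∀ a ∈ G.edgeSet, 0 < B a) →
        (∑ F ∈ twoForests G {i, w} {j, z}, chi B F) =
          ∑ F ∈ twoForests G {i, z} {j, w}, chi B F) ∧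
      ∀ B : Sym2 V → ℝ, (∀ a ∈ G.edgeSet, 0 < B a) → lodf G B i j w z = 0 := by
  have hne' : s(i, j) ≠ s(z, w) := fun h => hne (h.trans Sym2.eq_swap)
  have e1 := twoForests_empty_aux G i j w z hij hwz hne Nr hNr hi hout
  have e2 := twoForests_empty_aux G i j z w hij hwz.symm hne' Nr hNr hi
    (fun h => hout ⟨h.2, h.1⟩)
  constructor
  · intro B _
    rw [e1, e2]
  · intro B _
    rw [lodf, e1, e2]
    simp
end

section
/- Let G = (N, E) be a 2-connected finite simple graph (connected, at least three vertices, and no cut vertex) and let e = (i,j) and ê = (w,z) be two distinct edges of G. Then T({i,w}, {j,z}) ∪ T({i,z}, {j,w}) ≠ ∅, i.e., there exists a spanning forest of G consisting of exactly two vertex-disjoint trees such that one tree contains i and one endpoint of ê and the other tree contains j and the other endpoint of ê. -/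
open Finset

variable {V : Type*} [Fintype V] [DecidableEq V]

/-- `G` is 2-connected: it is connected, has at least three vertices, and remains
connected after the deletion of any single vertex. -/
def TwoConnected (G : SimpleGraph V) : Prop :=
  G.Connected ∧ 3 ≤ Fintype.card V ∧
    ∀ u : V, (G.induce ({u}ᶜ : Set V)).Connected

/-! Whitney's argument, run along a walk, gives two internally disjoint `u`–`v` paths for all
`u ≠ v`. Rerouting along a path from `z` that avoids `w` turns two such `i`–`w` paths into a fan
from `i` to `w` and `z`; rerouting once more, along a path from `j` that avoids `i`, gives disjoint
paths `P` from `i` and `Q` from `j` ending at `w` and `z` (in some order). Then `P⁻¹ · ij · Q` is a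
path; extend it to a spanning tree and delete the edge `ij`. -/

namespace SimpleGraph

variable {V : Type*} {G : SimpleGraph V}

open Walk

lemma Walk.IsPath.isAcyclic_fromEdgeSet {u v : V} {p : G.Walk u v} (hp : p.IsPath) :
    (fromEdgeSet {e | e ∈ p.edges}).IsAcyclic := by
  induction p with
  | nil => simp
  | @cons u v w h p ih =>
    rw [cons_isPath_iff] at hp
    have hsplit : fromEdgeSet {e | e ∈ (cons h p).edges} =
        fromEdgeSet {e | e ∈ p.edges} ⊔ edge u v := by
      rw [edge, ← fromEdgeSet_union]
      congr 1
      ext e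
      simp
    rw [hsplit]
    refine (ih hp.1).sup_edge_of_not_reachable ?_
    rintro ⟨r⟩
    cases r with
    | nil => exact h.ne rfl
    | cons hadj _ => exact hp.2 (p.fst_mem_support_of_mem_edges ((fromEdgeSet_adj _).mp hadj).1)

lemma Reachable.deleteEdges_or {x u : V} (v : V) (h : G.Reachable x u) :
    (G.deleteEdges {s(u, v)}).Reachable x u ∨ (G.deleteEdges {s(u, v)}).Reachable x v := by
  obtain ⟨p⟩ := h
  induction p with
  | nil => exact .inl .rfl
  | @cons x y u hxy p ih =>
    by_cases he : s(x, y) = s(u, v)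
    · rcases Sym2.eq_iff.mp he with ⟨rfl, -⟩ | ⟨rfl, -⟩
      · exact .inl .rfl
      · exact .inr .rfl
    · have hadj : (G.deleteEdges {s(u, v)}).Adj x y := by simp [hxy, he]
      exact ih.imp hadj.reachable.trans hadj.reachable.trans

lemma exists_walk_notMem_support {u a b : V} (h : (G.induce {u}ᶜ).Connected)
    (ha : a ≠ u) (hb : b ≠ u) : ∃ p : G.Walk a b, u ∉ p.support := by
  obtain ⟨p⟩ := h.preconnected ⟨a, by simpa⟩ ⟨b, by simpa⟩
  refine ⟨p.map ⟨Subtype.val, fun h => h⟩, fun hu => ?_⟩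
  rw [Walk.support_map, List.mem_map] at hu
  obtain ⟨x, -, hx⟩ := hu
  exact x.2 hx

variable [DecidableEq V]

lemma exists_walk_notMem_support_first_mem {u a b : V} (h : (G.induce {u}ᶜ).Connected)
    (ha : a ≠ u) {s : Finset V} (hb : b ∈ s) (hbu : b ≠ u) :
    ∃ x ∈ s, ∃ R : G.Walk a x, u ∉ R.support ∧ ∀ y ∈ R.support, y ∈ s → y = x := by
  obtain ⟨p, hp⟩ := exists_walk_notMem_support h ha hbu
  obtain ⟨x, hx, hxp, hfirst⟩ := p.exists_mem_support_forall_mem_support_imp_eq s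
    ⟨b, by simp [hb]⟩
  exact ⟨x, hx, p.takeUntil x hxp, fun hu => hp (p.support_takeUntil_subset_support hxp hu),
    fun y hy hys => hfirst y hys hy⟩

lemma exists_fan_of_internallyDisjoint {u w z : V} (hw : (G.induce {w}ᶜ).Connected)
    {A₁ A₂ : G.Walk u w} (h₁ : A₁.IsPath) (h₂ : A₂.IsPath)
    (hA : ∀ x ∈ A₁.support, x ∈ A₂.support → x = u ∨ x = w) (huw : u ≠ w) (hzw : z ≠ w) :
    ∃ (P : G.Walk u w) (Q : G.Walk u z), P.IsPath ∧ Q.IsPath ∧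
      ∀ x ∈ P.support, x ∈ Q.support → x = u := by
  obtain ⟨x, hxS, R, hwR, hfirst⟩ := exists_walk_notMem_support_first_mem hw hzw
    (s := A₁.support.toFinset ∪ A₂.support.toFinset) (by simp) huw
  simp only [Finset.mem_union, List.mem_toFinset] at hxS hfirst
  wlog hx₁ : x ∈ A₁.support generalizing A₁ A₂
  · exact this h₂ h₁ (fun y hy₂ hy₁ => hA y hy₁ hy₂) hxS.symm
      (fun y hy hyS => hfirst y hy hyS.symm) (hxS.resolve_left hx₁)
  have hxw : x ≠ w := fun h => hwR (h ▸ R.end_mem_support)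
  -- `Q` follows `A₁` up to `x`, the first vertex of `R` on `A₁ ∪ A₂`, then `R` back to `z`.
  refine ⟨A₂, ((A₁.takeUntil x hx₁).append R.reverse).bypass, h₂, bypass_isPath _, ?_⟩
  intro y hy₂ hyQ
  rcases (mem_support_append_iff _ _).mp (support_bypass_subset_support _ hyQ) with hyT | hyR
  · refine (hA y (support_takeUntil_subset_support _ _ hyT) hy₂).resolve_right ?_
    rintro rfl
    exact endpoint_notMem_support_takeUntil h₁ hx₁ hxw.symm hyT
  · rw [support_reverse, List.mem_reverse] at hyR
    obtain rfl := hfirst y hyR (.inr hy₂)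
    exact (hA y hx₁ hy₂).resolve_right hxw

lemma exists_internallyDisjoint_paths (hG : G.Connected)
    (hcut : ∀ v, (G.induce {v}ᶜ).Connected) {u v : V} (huv : u ≠ v) :
    ∃ A₁ A₂ : G.Walk u v, A₁.IsPath ∧ A₂.IsPath ∧
      ∀ x ∈ A₁.support, x ∈ A₂.support → x = u ∨ x = v := by
  obtain ⟨p⟩ := hG.preconnected v u
  induction p with
  | nil => exact absurd rfl huv
  | @cons v w u hvw p ih =>
    by_cases hwu : w = u
    · subst hwu
      exact ⟨_, _, (Path.singleton hvw.symm).2, (Path.singleton hvw.symm).2, by simp⟩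
    obtain ⟨A₁, A₂, h₁, h₂, hA⟩ := ih (Ne.symm hwu)
    obtain ⟨P, Q, hP, hQ, hPQ⟩ :=
      exists_fan_of_internallyDisjoint (hcut w) h₁ h₂ hA (Ne.symm hwu) hvw.ne
    have hvP : v ∉ P.support := fun hv => huv (hPQ v hv Q.end_mem_support).symm
    refine ⟨Q, P.concat hvw.symm, hQ, hP.concat hvP hvw.symm, fun x hxQ hx => ?_⟩
    simp only [support_concat, List.mem_append, List.mem_singleton] at hx
    exact hx.imp_left (hPQ x · hxQ)

lemma exists_disjoint_paths_of_fan {i j w z : V} (hi : (G.induce {i}ᶜ).Connected)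
    (hij : i ≠ j) (hwi : w ≠ i) {Pw : G.Walk i w} {Pz : G.Walk i z} (hPw : Pw.IsPath)
    (hPz : Pz.IsPath) (hfan : ∀ x ∈ Pw.support, x ∈ Pz.support → x = i) :
    (∃ (P : G.Walk i w) (Q : G.Walk j z), P.IsPath ∧ Q.IsPath ∧
      ∀ x ∈ P.support, x ∉ Q.support) ∨
    (∃ (P : G.Walk i z) (Q : G.Walk j w), P.IsPath ∧ Q.IsPath ∧
      ∀ x ∈ P.support, x ∉ Q.support) := by
  obtain ⟨x, hxS, R, hiR, hfirst⟩ := exists_walk_notMem_support_first_mem hi hij.symm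
    (s := Pw.support.toFinset ∪ Pz.support.toFinset) (b := w) (by simp) hwi
  clear hwi
  simp only [Finset.mem_union, List.mem_toFinset] at hxS hfirst
  wlog hxw : x ∈ Pw.support generalizing w z
  · exact (this hPz hPw (fun y hz hw => hfan y hw hz) hxS.symm
      (fun y hy hyS => hfirst y hy hyS.symm) (hxS.resolve_left hxw)).symm
  have hxi : x ≠ i := fun h => hiR (h ▸ R.end_mem_support)
  have hxw' : x ∈ Pw.reverse.support := by simpa using hxw
  refine .inr ⟨Pz, (R.append (Pw.reverse.takeUntil x hxw').reverse).bypass, hPz,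
    bypass_isPath _, fun y hyz hyQ => ?_⟩
  rcases (mem_support_append_iff _ _).mp (support_bypass_subset_support _ hyQ) with hyR | hyT
  · obtain rfl := hfirst y hyR (.inr hyz)
    exact hxi (hfan y hxw hyz)
  · rw [support_reverse, List.mem_reverse] at hyT
    obtain rfl := hfan y (by simpa using support_takeUntil_subset_support _ _ hyT) hyz
    exact endpoint_notMem_support_takeUntil hPw.reverse hxw' hxi.symm hyT

lemma exists_disjoint_paths (hG : G.Connected) (hcut : ∀ v, (G.induce {v}ᶜ).Connected)
    {i j w z : V} (hij : i ≠ j) (hwz : w ≠ z) :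
    (∃ (P : G.Walk i w) (Q : G.Walk j z), P.IsPath ∧ Q.IsPath ∧
      ∀ x ∈ P.support, x ∉ Q.support) ∨
    (∃ (P : G.Walk i z) (Q : G.Walk j w), P.IsPath ∧ Q.IsPath ∧
      ∀ x ∈ P.support, x ∉ Q.support) := by
  wlog hiw : i ≠ w generalizing w z
  · exact (this hwz.symm (not_not.mp hiw ▸ hwz)).symm
  obtain ⟨A₁, A₂, h₁, h₂, hA⟩ := exists_internallyDisjoint_paths hG hcut hiw
  obtain ⟨Pw, Pz, hPw, hPz, hfan⟩ :=
    exists_fan_of_internallyDisjoint (hcut w) h₁ h₂ hA hiw hwz.symm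
  exact exists_disjoint_paths_of_fan (hcut i) hij (Ne.symm hiw) hPw hPz hfan

end SimpleGraph

section

open SimpleGraph Walk

variable {V : Type*} [Finite V]

lemma isTwoTreeForest_of_isTree {G T : SimpleGraph V} (hTG : T ≤ G) (hT : T.IsTree)
    {i j : V} (hij : T.Adj i j) {N₁ N₂ : Set V}
    (h₁ : ∀ x ∈ N₁, (T.deleteEdges {s(i, j)}).Reachable x i)
    (h₂ : ∀ x ∈ N₂, (T.deleteEdges {s(i, j)}).Reachable x j) :
    ∃ F, IsTwoTreeForest G N₁ N₂ F := by
  refine ⟨(T.deleteEdges {s(i, j)}).edgeSet.toFinite.toFinset, ?_⟩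
  rw [IsTwoTreeForest, Set.Finite.coe_toFinset, fromEdgeSet_edgeSet]
  exact ⟨edgeSet_subset_edgeSet.mpr ((deleteEdges_le _).trans hTG),
    hT.isAcyclic.anti (deleteEdges_le _), i, j,
    isBridge_iff.mp (isAcyclic_iff_forall_isBridge.mp hT.isAcyclic (e := s(i, j)) hij),
    fun x => (hT.connected.preconnected x i).deleteEdges_or j, h₁, h₂⟩

lemma exists_isTwoTreeForest_of_disjoint_paths {G : SimpleGraph V} (hG : G.Connected)
    {i j w z : V} (hij : G.Adj i j) {P : G.Walk i w} {Q : G.Walk j z} (hP : P.IsPath)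
    (hQ : Q.IsPath) (hPQ : ∀ x ∈ P.support, x ∉ Q.support) :
    ∃ F, IsTwoTreeForest G {i, w} {j, z} F := by
  set W := P.reverse.append (cons hij Q)
  have hW : W.IsPath := by
    rw [isPath_def, support_append, support_reverse, support_cons, List.tail_cons,
      List.nodup_append]
    exact ⟨List.nodup_reverse.mpr hP.support_nodup, hQ.support_nodup,
      fun x hx y hy hxy => hPQ x (List.mem_reverse.mp hx) (hxy ▸ hy)⟩
  obtain ⟨T, hWT, hTG, hT⟩ := hG.exists_isTree_le_of_le_of_isAcyclic
    (H := fromEdgeSet {e | e ∈ W.edges})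
    ((fromEdgeSet_le _).mpr fun e he => W.edges_subset_edgeSet he.1) hW.isAcyclic_fromEdgeSet
  have hWT' : ∀ e ∈ W.edges, e ∈ T.edgeSet := fun e he => edgeSet_subset_edgeSet.mpr hWT <| by
    rw [edgeSet_fromEdgeSet]
    exact ⟨he, G.not_isDiag_of_mem_edgeSet (W.edges_subset_edgeSet he)⟩
  have reach {a b : V} (p : G.Walk a b) (hpW : ∀ e ∈ p.edges, e ∈ W.edges)
      (hp : s(i, j) ∉ p.edges) : (T.deleteEdges {s(i, j)}).Reachable a b :=
    (p.transfer _ fun e he => by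
      rw [edgeSet_deleteEdges]
      exact ⟨hWT' e (hpW e he), fun h => hp (h ▸ he)⟩).reachable
  refine isTwoTreeForest_of_isTree hTG hT (hWT' s(i, j) (by simp [W])) ?_ ?_
  · rintro x (rfl | rfl)
    · rfl
    · exact reach P.reverse (fun e he => by simp_all [W]) fun h =>
        hPQ j (by simpa using P.reverse.snd_mem_support_of_mem_edges h) Q.start_mem_support
  · rintro x (rfl | rfl)
    · rfl
    · exact reach Q.reverse (fun e he => by simp_all [W]) fun h =>
        hPQ i P.start_mem_support (by simpa using Q.reverse.fst_mem_support_of_mem_edges h)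

end

theorem twoForests_nonempty_of_twoConnected_general (G : SimpleGraph V) (h2 : TwoConnected G)
    (i j w z : V) (hij : G.Adj i j) (hwz : G.Adj w z) :
    (twoForests G {i, w} {j, z} ∪ twoForests G {i, z} {j, w}).Nonempty := by
  obtain ⟨hconn, -, hcut⟩ := h2
  rcases SimpleGraph.exists_disjoint_paths hconn hcut hij.ne hwz.ne with
    ⟨P, Q, hP, hQ, hPQ⟩ | ⟨P, Q, hP, hQ, hPQ⟩
  · obtain ⟨F, hF⟩ := exists_isTwoTreeForest_of_disjoint_paths hconn hij hP hQ hPQ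
    exact ⟨F, mem_union_left _ (by simpa [twoForests] using hF)⟩
  · obtain ⟨F, hF⟩ := exists_isTwoTreeForest_of_disjoint_paths hconn hij hP hQ hPQ
    exact ⟨F, mem_union_right _ (by simpa [twoForests, Set.pair_comm] using hF)⟩

/-- If `G` is a 2-connected finite simple graph and `e = (i, j)`,
`ê = (w, z)` are two distinct edges of `G`, then `T({i,w},{j,z}) ∪ T({i,z},{j,w}) ≠ ∅`:
there is a spanning forest of `G` consisting of exactly two vertex-disjoint trees, one
containing `i` and one endpoint of `ê`, the other containing `j` and the other
endpoint of `ê`. -/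
theorem twoForests_nonempty_of_twoConnected (G : SimpleGraph V) (h2 : TwoConnected G)
    (i j w z : V) (hij : G.Adj i j) (hwz : G.Adj w z) (hne : s(i, j) ≠ s(w, z)) :
    (twoForests G {i, w} {j, z} ∪ twoForests G {i, z} {j, w}).Nonempty :=
  twoForests_nonempty_of_twoConnected_general G h2 i j w z hij hwz
end

section
/- Let G = K_n be the complete graph on n ≥ 4 vertices and let i, j, w, z be four pairwise distinct vertices. Then |T({i,w}, {j,z})| = |T({i,z}, {j,w})|. Consequently, if all edge susceptances equal 1, the line outage distribution factor between the edges e = (i,j) and ê = (w,z) satisfies K_{eê} = 0. -/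
open Finset

variable {V : Type*} [Fintype V] [DecidableEq V]

/-- Relabelling vertices by an equivalence gives an isomorphism of the
graphs generated by an edge set and its image. -/
noncomputable def forestIso (e : V ≃ V) (F : Finset (Sym2 V)) :
    SimpleGraph.fromEdgeSet (↑F : Set (Sym2 V)) ≃g
      SimpleGraph.fromEdgeSet (↑(F.image (Sym2.map e)) : Set (Sym2 V)) where
  toEquiv := e
  map_rel_iff' := by
    intro a b
    simp only [SimpleGraph.fromEdgeSet_adj, Finset.coe_image, Set.mem_image,
      Finset.mem_coe, ne_eq, EmbeddingLike.apply_eq_iff_eq]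
    constructor
    · rintro ⟨⟨s, hs, hmap⟩, hne⟩
      have hseq : s = s(a, b) := by
        apply Sym2.map.injective e.injective
        rw [hmap, Sym2.map_pair_eq]
      exact ⟨hseq ▸ hs, hne⟩
    · rintro ⟨hs, hne⟩
      exact ⟨⟨s(a, b), hs, (Sym2.map_pair_eq e a b)⟩, hne⟩

lemma isTwoTreeForest_map (e : V ≃ V) {N₁ N₂ : Set V} {F : Finset (Sym2 V)}
    (h : IsTwoTreeForest (⊤ : SimpleGraph V) N₁ N₂ F) :
    IsTwoTreeForest (⊤ : SimpleGraph V) (e '' N₁) (e '' N₂) (F.image (Sym2.map e)) := by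
  obtain ⟨hsub, hac, u, v, huv, hcov, hN₁, hN₂⟩ := h
  set φ := forestIso e F
  refine ⟨?_, ?_, e u, e v, ?_, ?_, ?_, ?_⟩
  · intro s hs
    simp only [Finset.coe_image, Set.mem_image, Finset.mem_coe] at hs
    obtain ⟨t, ht, rfl⟩ := hs
    have := hsub ht
    rw [SimpleGraph.edgeSet_top, Set.mem_compl_iff, Sym2.mem_diagSet] at this ⊢
    rwa [Sym2.isDiag_map e.injective]
  · intro a c hc
    exact hac (c.map φ.symm.toHom)
      ((SimpleGraph.Walk.map_isCycle_iff_of_injective φ.symm.injective).2 hc)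
  · intro hr
    exact huv ((SimpleGraph.Iso.reachable_iff (φ := φ)).1 hr)
  · intro x
    have := hcov (e.symm x)
    have hx : (φ : V → V) (e.symm x) = x := e.apply_symm_apply x
    rcases this with h' | h'
    · left
      have h2 := SimpleGraph.Reachable.map φ.toHom h'
      rwa [show (φ.toHom : V → V) (e.symm x) = x from hx] at h2
    · right
      have h2 := SimpleGraph.Reachable.map φ.toHom h'
      rwa [show (φ.toHom : V → V) (e.symm x) = x from hx] at h2
  · rintro x ⟨y, hy, rfl⟩
    exact SimpleGraph.Reachable.map φ.toHom (hN₁ y hy)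
  · rintro x ⟨y, hy, rfl⟩
    exact SimpleGraph.Reachable.map φ.toHom (hN₂ y hy)

lemma image_map_image_map (e : V ≃ V) (F : Finset (Sym2 V)) :
    (F.image (Sym2.map e)).image (Sym2.map e.symm) = F := by
  rw [Finset.image_image]
  have : (Sym2.map e.symm ∘ Sym2.map e) = id := by
    funext s
    simp [Sym2.map_map, Function.comp_def]
  rw [this, Finset.image_id]


/-- In the complete graph on `n ≥ 4` vertices, for four pairwise
distinct vertices `i, j, w, z` we have `|T({i,w},{j,z})| = |T({i,z},{j,w})|`;
consequently, with all susceptances equal to `1`, the line outage distribution factor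
between the edges `e = (i, j)` and `ê = (w, z)` satisfies `K_{e ê} = 0`. -/
theorem completeGraph_symmetry (hn : 4 ≤ Fintype.card V)
    (i j w z : V) (hij : i ≠ j) (hiw : i ≠ w) (hiz : i ≠ z)
    (hjw : j ≠ w) (hjz : j ≠ z) (hwz : w ≠ z) :
    (twoForests (⊤ : SimpleGraph V) {i, w} {j, z}).card =
        (twoForests (⊤ : SimpleGraph V) {i, z} {j, w}).card ∧
      lodf (⊤ : SimpleGraph V) (fun _ => 1) i j w z = 0 := by
  classical
  set σ : V ≃ V := Equiv.swap w z with hσ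
  have hσi : σ i = i := Equiv.swap_apply_of_ne_of_ne hiw hiz
  have hσj : σ j = j := Equiv.swap_apply_of_ne_of_ne hjw hjz
  have hσw : σ w = z := Equiv.swap_apply_left w z
  have hσz : σ z = w := Equiv.swap_apply_right w z
  have him : σ '' ({i, w} : Set V) = {i, z} := by
    rw [Set.image_insert_eq, Set.image_singleton, hσi, hσw]
  have him2 : σ '' ({j, z} : Set V) = {j, w} := by
    rw [Set.image_insert_eq, Set.image_singleton, hσj, hσz]
  have him3 : σ '' ({i, z} : Set V) = {i, w} := by
    rw [Set.image_insert_eq, Set.image_singleton, hσi, hσz]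
  have him4 : σ '' ({j, w} : Set V) = {j, z} := by
    rw [Set.image_insert_eq, Set.image_singleton, hσj, hσw]
  have hmem : ∀ (N₁ N₂ : Set V) (F : Finset (Sym2 V)),
      F ∈ twoForests (⊤ : SimpleGraph V) N₁ N₂ ↔
        IsTwoTreeForest (⊤ : SimpleGraph V) N₁ N₂ F := by
    intro N₁ N₂ F
    simp [twoForests]
  have hcard : (twoForests (⊤ : SimpleGraph V) {i, w} {j, z}).card =
      (twoForests (⊤ : SimpleGraph V) {i, z} {j, w}).card := by
    refine Finset.card_bij' (fun F _ => F.image (Sym2.map σ))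
      (fun F _ => F.image (Sym2.map σ)) ?_ ?_ ?_ ?_
    · intro F hF
      rw [hmem] at hF ⊢
      have := isTwoTreeForest_map σ hF
      rwa [him, him2] at this
    · intro F hF
      rw [hmem] at hF ⊢
      have := isTwoTreeForest_map σ hF
      rwa [him3, him4] at this
    · intro F _
      have h := image_map_image_map σ F
      rw [Equiv.symm_swap] at h
      exact h
    · intro F _
      have h := image_map_image_map σ F
      rw [Equiv.symm_swap] at h
      exact h
  refine ⟨hcard, ?_⟩
  have hchi : ∀ F : Finset (Sym2 V), chi (fun _ => (1 : ℝ)) F = 1 := by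
    intro F; simp [chi]
  have hsum : ∀ (N₁ N₂ : Set V),
      (∑ F ∈ twoForests (⊤ : SimpleGraph V) N₁ N₂, chi (fun _ => (1 : ℝ)) F) =
        (twoForests (⊤ : SimpleGraph V) N₁ N₂).card := by
    intro N₁ N₂
    rw [Finset.sum_congr rfl (fun F _ => hchi F), Finset.sum_const, nsmul_eq_mul, mul_one]
  unfold lodf
  rw [hsum, hsum, hcard]
  simp
end
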